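/- arXiv:0804.4644 — 8 statements merged into one kernel-verified Lean document; each statement's English description precedes it below -/
import Mathlib

section
/- Let $k \ge 1$ and let $q_1, \dots, q_k$ be positive integers. Set $\mathcal{Q} = q_1 \cdots q_k$, $\mathcal{Q}_i = \mathcal{Q}/q_i$ for each $i$, and $h = \gcd(\mathcal{Q}_1, \dots, \mathcal{Q}_k)$. Let $N$ be the number of integer tuples $(x_1, \dots, x_k) \in \mathbb{Z}^k$ such that $x_1 < 0$, $0 \le x_i < q_i$ for all $2 \le i \le k$, and $\sum_{i=1}^k x_i \mathcal{Q}_i \ge 0$ (equivalently $\sum_{i=1}^k x_i/q_i \ge 0$). Then $N$ is finite and $2N = (k-1)\mathcal{Q} - \sum_{i=1}^k \mathcal{Q}_i + h$. -/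
open Finset

private lemma ecl_gauss (m : ℤ) (hm : 0 ≤ m) :
    2 * ∑ j ∈ Finset.Ico (0:ℤ) m, j = m * (m - 1) := by
  obtain ⟨p, rfl⟩ := Int.eq_ofNat_of_zero_le hm
  induction p with
  | zero => simp
  | succ p ih =>
    have hins : Finset.Ico (0:ℤ) (p+1 : ℕ) = insert ((p : ℕ) : ℤ) (Finset.Ico (0:ℤ) (p : ℕ)) := by
      ext x
      simp only [Finset.mem_Ico, Finset.mem_insert]
      omega
    have hnotmem : ((p : ℕ) : ℤ) ∉ Finset.Ico (0:ℤ) (p : ℕ) := by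
      simp [Finset.mem_Ico]
    rw [hins, Finset.sum_insert hnotmem, mul_add, ih (Int.natCast_nonneg p)]
    push_cast
    ring

private lemma ecl_bezout {ι : Type*} [DecidableEq ι] (s : Finset ι) (f : ι → ℤ) :
    ∃ a : ι → ℤ, ∑ i ∈ s, a i * f i = s.gcd f := by
  induction s using Finset.induction_on with
  | empty => exact ⟨0, by simp⟩
  | @insert i s hi ih =>
    obtain ⟨a, ha⟩ := ih
    set A := Int.gcdA (f i) (s.gcd f)
    set B := Int.gcdB (f i) (s.gcd f)
    refine ⟨fun j => if j = i then A else B * a j, ?_⟩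
    rw [Finset.sum_insert hi, Finset.gcd_insert]
    have hco : (GCDMonoid.gcd (f i) (s.gcd f) : ℤ) = (Int.gcd (f i) (s.gcd f) : ℤ) :=
      (Int.coe_gcd _ _).symm
    rw [hco, Int.gcd_eq_gcd_ab]
    have hsum : ∑ j ∈ s, (if j = i then A else B * a j) * f j = B * ∑ j ∈ s, a j * f j := by
      rw [Finset.mul_sum]
      refine Finset.sum_congr rfl fun j hj => ?_
      rw [if_neg (by rintro rfl; exact hi hj)]
      ring
    simp only [if_pos rfl]
    rw [hsum, ha]
    simp only [if_true, ite_true, eq_self_iff_true]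
    ring

/-- Lemma 7.2 of Neumann–Wahl, "The End Curve Theorem for normal complex surface
singularities": a lattice-point counting identity.  Given positive integers
`q 0, …, q (k-1)` with `k ≥ 1`, set `Q = ∏ q i`, `Qi i = Q / q i`, and
`h = gcd (Qi 0, …, Qi (k-1))`.  Then the set `S` of integer tuples `x` with
`x 0 < 0`, `0 ≤ x i < q i` for `i ≠ 0`, and `∑ x i * Qi i ≥ 0` (equivalently
`∑ x i / q i ≥ 0`) is finite, and `2 * |S| = (k-1) * Q - ∑ Qi i + h`. -/
theorem end_curve_lemma_count (k : ℕ) (hk : 1 ≤ k) (i0 : Fin k) (hi0 : (i0 : ℕ) = 0)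
    (q : Fin k → ℤ) (hq : ∀ i, 0 < q i)
    (Q : ℤ) (hQ : Q = ∏ i, q i)
    (Qi : Fin k → ℤ) (hQi : ∀ i, Qi i = Q / q i)
    (h : ℤ) (hh : h = Finset.gcd Finset.univ Qi)
    (S : Set (Fin k → ℤ))
    (hS : S = {x | x i0 < 0 ∧ (∀ i, i ≠ i0 → 0 ≤ x i ∧ x i < q i) ∧
      0 ≤ ∑ i, x i * Qi i}) :
    S.Finite ∧ 2 * (S.ncard : ℤ) = ((k : ℤ) - 1) * Q - (∑ i, Qi i) + h := by
  classical
  -- basic positivity facts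
  have hQpos : 0 < Q := by rw [hQ]; exact Finset.prod_pos fun i _ => hq i
  have hdvd : ∀ i, q i ∣ Q := fun i => by
    rw [hQ]; exact Finset.dvd_prod_of_mem q (Finset.mem_univ i)
  have hQfact : ∀ i, q i * Qi i = Q := fun i => by
    rw [hQi]; exact Int.mul_ediv_cancel' (hdvd i)
  have hQipos : ∀ i, 0 < Qi i := by
    intro i
    rcases mul_pos_iff.mp (show 0 < q i * Qi i by rw [hQfact i]; exact hQpos) with
      ⟨_, h2⟩ | ⟨h1, _⟩
    · exact h2
    · exact absurd (hq i) (not_lt.mpr h1.le)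
  set n := Qi i0 with hn_def
  have hn : 0 < n := hQipos i0
  have hnQ : n ∣ Q := ⟨q i0, by rw [← hQfact i0]; ring⟩
  set u : Finset (Fin k) := Finset.univ.erase i0 with hu_def
  have hprodu : ∏ i ∈ u, q i = n := by
    have h1 : q i0 * ∏ i ∈ u, q i = Q := by
      rw [Finset.mul_prod_erase Finset.univ q (Finset.mem_univ i0), ← hQ]
    have h2 : q i0 * n = Q := hQfact i0
    exact mul_left_cancel₀ (hq i0).ne' (h1.trans h2.symm)
  -- gcd facts
  have hgdvd : ∀ i, h ∣ Qi i := fun i => by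
    rw [hh]; exact Finset.gcd_dvd (Finset.mem_univ i)
  have hgnn : 0 ≤ h := by
    rw [hh, ← Finset.normalize_gcd, ← Int.abs_eq_normalize]
    exact abs_nonneg _
  have hgpos : 0 < h := by
    rcases hgnn.lt_or_eq with hlt | heq
    · exact hlt
    · exfalso
      have h0 : Finset.gcd Finset.univ Qi = 0 := by rw [← hh, ← heq]
      have := Finset.gcd_eq_zero_iff.mp h0 i0 (Finset.mem_univ i0)
      exact (hQipos i0).ne' this
  have hgn : h ∣ n := hgdvd i0
  -- the box of tuples vanishing at i0
  set B : Finset (Fin k → ℤ) :=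
    Fintype.piFinset (fun i => if i = i0 then ({0} : Finset ℤ) else Finset.Ico 0 (q i))
    with hB_def
  have hmemB : ∀ y, y ∈ B ↔ (y i0 = 0 ∧ ∀ i, i ≠ i0 → (0 ≤ y i ∧ y i < q i)) := by
    intro y
    rw [hB_def, Fintype.mem_piFinset]
    constructor
    · intro hy
      constructor
      · have := hy i0; simpa using this
      · intro i hi
        have := hy i
        rw [if_neg hi] at this
        simpa [Finset.mem_Ico] using this
    · rintro ⟨h0, hrest⟩ i
      by_cases hi : i = i0
      · subst hi; simp [h0]
      · rw [if_neg hi]; simpa [Finset.mem_Ico] using hrest i hi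
  have hcardB : (B.card : ℤ) = n := by
    have hc : B.card = ∏ i, ((if i = i0 then ({0} : Finset ℤ) else Finset.Ico 0 (q i)).card) := by
      rw [hB_def, Fintype.card_piFinset]
    rw [hc, Nat.cast_prod,
      ← Finset.mul_prod_erase Finset.univ
        (fun i => (((if i = i0 then ({0} : Finset ℤ) else Finset.Ico 0 (q i)).card : ℤ)))
        (Finset.mem_univ i0)]
    simp only [eq_self_iff_true, if_true, ite_true, Finset.card_singleton, Nat.cast_one,
      one_mul]
    rw [← hprodu]
    refine Finset.prod_congr rfl fun i hi => ?_
    rw [if_neg (Finset.mem_erase.mp hi).1, Int.card_Ico, sub_zero,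
      Int.toNat_of_nonneg (hq i).le]
  -- the truncated linear form
  set T : (Fin k → ℤ) → ℤ := fun y => ∑ i ∈ u, y i * Qi i with hT_def
  have hsum_split : ∀ x : Fin k → ℤ, ∑ i, x i * Qi i = x i0 * n + T x := by
    intro x
    rw [hT_def]
    exact (Finset.add_sum_erase Finset.univ (fun i => x i * Qi i) (Finset.mem_univ i0)).symm
  have hTnonneg : ∀ y ∈ B, 0 ≤ T y := by
    intro y hy
    apply Finset.sum_nonneg
    intro i hi
    exact mul_nonneg (((hmemB y).mp hy).2 i (Finset.mem_erase.mp hi).1).1 (hQipos i).le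
  have hTdvd : ∀ y, h ∣ T y := fun y =>
    Finset.dvd_sum fun i _ => (hgdvd i).mul_left (y i)
  -- reduction of coefficients mod q i does not change T mod n
  have hmodred : ∀ b : Fin k → ℤ,
      (∑ i ∈ u, (b i % q i) * Qi i) % n = (∑ i ∈ u, b i * Qi i) % n := by
    intro b
    rw [Finset.sum_int_mod, Finset.sum_int_mod u n (fun i => b i * Qi i)]
    congr 1
    refine Finset.sum_congr rfl fun i _ => ?_
    have h1 : b i % q i ≡ b i [ZMOD q i] := Int.emod_emod_of_dvd _ dvd_rfl
    have h2 : (b i % q i) * Qi i ≡ b i * Qi i [ZMOD q i * Qi i] := h1.mul_right'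
    exact h2.of_dvd (by rw [hQfact i]; exact hnQ)
  -- the finite model of S
  set Sfin : Finset (Fin k → ℤ) :=
    (B.sigma fun y => Finset.Ico (-(T y / n)) 0).image
      (fun p => Function.update p.1 i0 p.2) with hSfin_def
  have hupd : ∀ x : Fin k → ℤ,
      x ∈ Sfin ↔ (x i0 < 0 ∧ (∀ i, i ≠ i0 → 0 ≤ x i ∧ x i < q i) ∧ 0 ≤ ∑ i, x i * Qi i) := by
    intro x
    rw [hSfin_def, Finset.mem_image]
    constructor
    · rintro ⟨⟨y, t⟩, hp, rfl⟩
      rw [Finset.mem_sigma] at hp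
      obtain ⟨hyB, ht⟩ := hp
      rw [Finset.mem_Ico] at ht
      obtain ⟨hy0, hybd⟩ := (hmemB y).mp hyB
      have hxi0 : Function.update y i0 t i0 = t := Function.update_self i0 t y
      have hxo : ∀ i, i ≠ i0 → Function.update y i0 t i = y i := fun i hi =>
        Function.update_of_ne hi t y
      refine ⟨by rw [hxi0]; exact ht.2, fun i hi => by rw [hxo i hi]; exact hybd i hi, ?_⟩
      have hTx : T (Function.update y i0 t) = T y := by
        rw [hT_def]
        exact Finset.sum_congr rfl fun i hi => by
          rw [hxo i (Finset.mem_erase.mp hi).1]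
      rw [hsum_split, hxi0, hTx]
      have h2 : -t ≤ T y / n := by linarith [ht.1]
      have h3 : -t * n ≤ T y := (Int.le_ediv_iff_mul_le hn).mp h2
      nlinarith
    · rintro ⟨hx0, hxbd, hxsum⟩
      refine ⟨⟨Function.update x i0 0, x i0⟩, ?_, ?_⟩
      · rw [Finset.mem_sigma]
        have hTy : T (Function.update x i0 0) = T x := by
          rw [hT_def]
          exact Finset.sum_congr rfl fun i hi => by
            rw [Function.update_of_ne (Finset.mem_erase.mp hi).1]
        constructor
        · show Function.update x i0 0 ∈ B
          rw [hmemB]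
          refine ⟨Function.update_self i0 0 x, fun i hi => ?_⟩
          rw [Function.update_of_ne hi]
          exact hxbd i hi
        · show x i0 ∈ Finset.Ico (-(T (Function.update x i0 0) / n)) 0
          rw [Finset.mem_Ico]
          refine ⟨?_, hx0⟩
          rw [hTy]
          have h1 : 0 ≤ x i0 * n + T x := by rw [← hsum_split]; exact hxsum
          have h2 : -(x i0) * n ≤ T x := by nlinarith
          have h3 : -(x i0) ≤ T x / n := (Int.le_ediv_iff_mul_le hn).mpr h2
          linarith
      · funext j
        by_cases hj : j = i0
        · subst hj; simp
        · simp [Function.update_of_ne hj]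
  have hcardS : (Sfin.card : ℤ) = ∑ y ∈ B, T y / n := by
    have hinj : Set.InjOn (fun p : (Σ _ : Fin k → ℤ, ℤ) => Function.update p.1 i0 p.2)
        ↑(B.sigma fun y => Finset.Ico (-(T y / n)) 0) := by
      rintro ⟨y, t⟩ hp ⟨y', t'⟩ hp' he
      rw [Finset.mem_coe, Finset.mem_sigma] at hp hp'
      have hy0 : y i0 = 0 := ((hmemB y).mp hp.1).1
      have hy0' : y' i0 = 0 := ((hmemB y').mp hp'.1).1
      have ht : t = t' := by
        have := congrFun he i0; simpa using this
      have hyy : y = y' := by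
        funext j
        by_cases hj : j = i0
        · subst hj; rw [hy0, hy0']
        · have := congrFun he j
          simpa [Function.update_of_ne hj] using this
      rw [ht, hyy]
    rw [hSfin_def, Finset.card_image_of_injOn hinj, Finset.card_sigma, Nat.cast_sum]
    refine Finset.sum_congr rfl fun y hy => ?_
    rw [Int.card_Ico]
    have h1 : 0 ≤ T y / n := Int.ediv_nonneg (hTnonneg y hy) hn.le
    rw [zero_sub, neg_neg, Int.toNat_of_nonneg h1]
  have hSeq : S = ↑Sfin := by
    rw [hS]
    ext x
    rw [Finset.mem_coe, hupd x]
    rfl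
  have hfin : S.Finite := by rw [hSeq]; exact Sfin.finite_toSet
  refine ⟨hfin, ?_⟩
  -- the complement involution
  set σ : (Fin k → ℤ) → (Fin k → ℤ) := fun y i => if i = i0 then 0 else q i - 1 - y i
    with hσ_def
  have hσB : ∀ y ∈ B, σ y ∈ B := by
    intro y hy
    rw [hmemB] at hy ⊢
    refine ⟨by simp [hσ_def], fun i hi => ?_⟩
    simp only [hσ_def, if_neg hi]
    have := hy.2 i hi
    omega
  have hσσ : ∀ y ∈ B, σ (σ y) = y := by
    intro y hy
    funext i
    by_cases hi : i = i0
    · subst hi; simp [hσ_def, ((hmemB y).mp hy).1]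
    · simp only [hσ_def, if_neg hi]
      ring
  set C : ℤ := ∑ i ∈ u, (q i - 1) * Qi i with hC_def
  have hTσ : ∀ y, T y + T (σ y) = C := by
    intro y
    rw [hT_def, hC_def, ← Finset.sum_add_distrib]
    refine Finset.sum_congr rfl fun i hi => ?_
    simp only [hσ_def, if_neg (Finset.mem_erase.mp hi).1]
    ring
  have hreindex : ∑ y ∈ B, T (σ y) = ∑ y ∈ B, T y := by
    refine Finset.sum_nbij' σ σ hσB hσB hσσ hσσ fun y hy => rfl
  have e2 : 2 * ∑ y ∈ B, T y = n * C := by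
    have e1 : (∑ y ∈ B, T y) + (∑ y ∈ B, T (σ y)) = ∑ y ∈ B, C := by
      rw [← Finset.sum_add_distrib]
      exact Finset.sum_congr rfl fun y _ => hTσ y
    rw [hreindex, Finset.sum_const, nsmul_eq_mul] at e1
    rw [← hcardB]
    linarith
  have key1 : n * (2 * ∑ y ∈ B, T y / n) = 2 * ∑ y ∈ B, T y - 2 * ∑ y ∈ B, T y % n := by
    have e1 : ∀ y, n * (T y / n) = T y - T y % n := fun y => by
      have := Int.mul_ediv_add_emod (T y) n
      linarith
    calc n * (2 * ∑ y ∈ B, T y / n) = 2 * (n * ∑ y ∈ B, T y / n) := by ring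
      _ = 2 * ∑ y ∈ B, n * (T y / n) := by rw [Finset.mul_sum]
      _ = 2 * ∑ y ∈ B, (T y - T y % n) := by
          rw [Finset.sum_congr rfl fun y _ => e1 y]
      _ = 2 * ∑ y ∈ B, T y - 2 * ∑ y ∈ B, T y % n := by
          rw [Finset.sum_sub_distrib]; ring
  -- ===== fiber counting =====
  set F : ℤ → Finset (Fin k → ℤ) := fun c => B.filter (fun y => T y % n = c) with hF_def
  have hmapsto : ∀ y ∈ B, T y % n ∈ Finset.Ico (0:ℤ) n := fun y _ => by
    rw [Finset.mem_Ico]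
    exact ⟨Int.emod_nonneg _ hn.ne', Int.emod_lt_of_pos _ hn⟩
  have hsum_fib : ∑ y ∈ B, T y % n = ∑ c ∈ Finset.Ico (0:ℤ) n, c * ((F c).card : ℤ) := by
    rw [← Finset.sum_fiberwise_of_maps_to hmapsto (fun y => T y % n)]
    refine Finset.sum_congr rfl fun c hc => ?_
    rw [hF_def]
    rw [Finset.sum_congr rfl (fun y hy => (Finset.mem_filter.mp hy).2),
      Finset.sum_const, nsmul_eq_mul, mul_comm]
  have hcard_fib : ∑ c ∈ Finset.Ico (0:ℤ) n, (F c).card = B.card :=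
    (Finset.card_eq_sum_card_fiberwise hmapsto).symm
  obtain ⟨a, ha⟩ := ecl_bezout Finset.univ Qi
  rw [← hh] at ha
  have hfiber_ne : ∀ c, 0 ≤ c → c < n → h ∣ c → (F c).Nonempty := by
    intro c hc0 hcn hdc
    obtain ⟨e, he⟩ := hdc
    refine ⟨fun i => if i = i0 then 0 else (e * a i) % q i, Finset.mem_filter.mpr ⟨?_, ?_⟩⟩
    · rw [hmemB]
      refine ⟨by simp, fun i hi => ?_⟩
      simp only [if_neg hi]
      exact ⟨Int.emod_nonneg _ (hq i).ne', Int.emod_lt_of_pos _ (hq i)⟩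
    · have h1 : T (fun i => if i = i0 then 0 else (e * a i) % q i)
          = ∑ i ∈ u, ((e * a i) % q i) * Qi i := by
        rw [hT_def]
        exact Finset.sum_congr rfl fun i hi => by
          simp only [if_neg (Finset.mem_erase.mp hi).1]
      have h3 : (e * a i0) * Qi i0 + ∑ i ∈ u, (e * a i) * Qi i = ∑ i, (e * a i) * Qi i :=
        Finset.add_sum_erase Finset.univ (fun i => (e * a i) * Qi i) (Finset.mem_univ i0)
      have h4 : ∑ i, (e * a i) * Qi i = e * h := by
        calc ∑ i, (e * a i) * Qi i = e * ∑ i, a i * Qi i := by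
              rw [Finset.mul_sum]
              exact Finset.sum_congr rfl fun i _ => by ring
          _ = e * h := by rw [ha]
      have h5 : ∑ i ∈ u, (e * a i) * Qi i = c + (-(e * a i0)) * n := by
        have h6 : c = h * e := he
        have h7 : (e * a i0) * Qi i0 = (e * a i0) * n := by rw [hn_def]
        linarith [h3, h4, h6, h7]
      rw [h1, hmodred (fun i => e * a i), h5, Int.add_mul_emod_self_right]
      exact Int.emod_eq_of_lt hc0 hcn
  have hfiber_dvd : ∀ c, (F c).Nonempty → h ∣ c := by
    rintro c ⟨y, hy⟩
    rw [hF_def, Finset.mem_filter] at hy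
    obtain ⟨hyB, hyc⟩ := hy
    have h2 : c = T y - n * (T y / n) := by
      rw [← hyc]
      have := Int.mul_ediv_add_emod (T y) n
      linarith
    rw [h2]
    exact dvd_sub (hTdvd y) (hgn.mul_right _)
  have hfiber_range : ∀ c, (F c).Nonempty → 0 ≤ c ∧ c < n := by
    rintro c ⟨y, hy⟩
    rw [hF_def, Finset.mem_filter] at hy
    rw [← hy.2]
    exact ⟨Int.emod_nonneg _ hn.ne', Int.emod_lt_of_pos _ hn⟩
  -- shift maps between fibers
  set Φ : (Fin k → ℤ) → (Fin k → ℤ) → (Fin k → ℤ) :=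
    fun v y i => if i = i0 then 0 else (y i + v i) % q i with hΦ_def
  have hΦB : ∀ v y, y ∈ B → Φ v y ∈ B := by
    intro v y hy
    rw [hmemB]
    refine ⟨by simp [hΦ_def], fun i hi => ?_⟩
    simp only [hΦ_def, if_neg hi]
    exact ⟨Int.emod_nonneg _ (hq i).ne', Int.emod_lt_of_pos _ (hq i)⟩
  have hΦT : ∀ v y, T (Φ v y) % n = (T y + ∑ i ∈ u, v i * Qi i) % n := by
    intro v y
    have h1 : T (Φ v y) = ∑ i ∈ u, ((y i + v i) % q i) * Qi i := by
      rw [hT_def]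
      exact Finset.sum_congr rfl fun i hi => by
        simp only [hΦ_def, if_neg (Finset.mem_erase.mp hi).1]
    rw [h1, hmodred (fun i => y i + v i)]
    congr 1
    rw [hT_def, ← Finset.sum_add_distrib]
    exact Finset.sum_congr rfl fun i _ => by ring
  have hΦinv : ∀ v y, y ∈ B → Φ (fun i => -v i) (Φ v y) = y := by
    intro v y hy
    funext i
    by_cases hi : i = i0
    · subst hi
      simp [hΦ_def, ((hmemB y).mp hy).1]
    · simp only [hΦ_def, if_neg hi]
      have h1 : (y i + v i) % q i ≡ y i + v i [ZMOD q i] := Int.emod_emod_of_dvd _ dvd_rfl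
      have h2 : (y i + v i) % q i + -v i ≡ y i [ZMOD q i] := by
        have h3 := h1.add_right (-v i)
        rwa [add_neg_cancel_right] at h3
      have hb := ((hmemB y).mp hy).2 i hi
      calc ((y i + v i) % q i + -v i) % q i = y i % q i := h2
        _ = y i := Int.emod_eq_of_lt hb.1 hb.2
  have hfibcard : ∀ c d, (F c).Nonempty → (F d).Nonempty → (F c).card = (F d).card := by
    intro c d hcne hdne
    obtain ⟨w, hw⟩ := hcne
    obtain ⟨z, hz⟩ := hdne
    rw [hF_def, Finset.mem_filter] at hw hz
    have hmap : ∀ (c' d' : ℤ) (w' z' : Fin k → ℤ), w' ∈ B → z' ∈ B →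
        T w' % n = c' → T z' % n = d' →
        ∀ y ∈ F c', Φ (fun i => z' i - w' i) y ∈ F d' := by
      intro c' d' w' z' hw'B hz'B hw'c hz'd y hy
      rw [hF_def, Finset.mem_filter] at hy ⊢
      obtain ⟨hyB, hyc⟩ := hy
      refine ⟨hΦB _ y hyB, ?_⟩
      rw [hΦT]
      have hvt : ∑ i ∈ u, (z' i - w' i) * Qi i = T z' - T w' := by
        rw [hT_def, ← Finset.sum_sub_distrib]
        exact Finset.sum_congr rfl fun i _ => by ring
      rw [hvt]
      have h1 : T y % n = T w' % n := by rw [hyc, hw'c]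
      have h2 : T y + (T z' - T w') ≡ T w' + (T z' - T w') [ZMOD n] :=
        Int.ModEq.add_right _ h1
      have h3 : T y + (T z' - T w') ≡ T z' [ZMOD n] := by
        rwa [add_sub_cancel] at h2
      rw [h3, hz'd]
    refine Finset.card_bij' (fun y _ => Φ (fun i => z i - w i) y)
      (fun y _ => Φ (fun i => w i - z i) y)
      (hmap c d w z hw.1 hz.1 hw.2 hz.2) (hmap d c z w hz.1 hw.1 hz.2 hw.2) ?_ ?_
    · intro y hy
      have hyB : y ∈ B := (Finset.mem_filter.mp (by rwa [hF_def] at hy)).1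
      have : (fun i => w i - z i) = (fun i => -(z i - w i)) := by funext i; ring
      rw [this]
      exact hΦinv _ y hyB
    · intro y hy
      have hyB : y ∈ B := (Finset.mem_filter.mp (by rwa [hF_def] at hy)).1
      have : (fun i => z i - w i) = (fun i => -(w i - z i)) := by funext i; ring
      rw [this]
      exact hΦinv _ y hyB
  -- the set of residues
  have hndiv : h * (n / h) = n := Int.mul_ediv_cancel' hgn
  have hnhpos : 0 < n / h := by
    rcases mul_pos_iff.mp (show 0 < h * (n / h) by rw [hndiv]; exact hn) with ⟨_, h2⟩ | ⟨h1, _⟩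
    · exact h2
    · exact absurd hgpos (not_lt.mpr h1.le)
  have hmult : (Finset.Ico (0:ℤ) n).filter (fun c => h ∣ c)
      = Finset.image (fun j => h * j) (Finset.Ico (0:ℤ) (n / h)) := by
    ext c
    simp only [Finset.mem_filter, Finset.mem_Ico, Finset.mem_image]
    constructor
    · rintro ⟨⟨hc0, hcn⟩, e, rfl⟩
      refine ⟨e, ⟨nonneg_of_mul_nonneg_right ?_ hgpos, ?_⟩, rfl⟩
      · exact hc0
      · have : h * e < h * (n / h) := by rw [hndiv]; exact hcn
        exact lt_of_mul_lt_mul_left this hgpos.le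
    · rintro ⟨j, ⟨hj0, hjn⟩, rfl⟩
      refine ⟨⟨mul_nonneg hgpos.le hj0, ?_⟩, ⟨j, rfl⟩⟩
      calc h * j < h * (n / h) := by
            exact mul_lt_mul_of_pos_left hjn hgpos
        _ = n := hndiv
  have hF0 : (F 0).Nonempty := hfiber_ne 0 le_rfl hn (dvd_zero h)
  have hcard_const : ∀ c ∈ (Finset.Ico (0:ℤ) n).filter (fun c => h ∣ c),
      (F c).card = (F 0).card := by
    intro c hc
    rw [Finset.mem_filter, Finset.mem_Ico] at hc
    exact hfibcard c 0 (hfiber_ne c hc.1.1 hc.1.2 hc.2) hF0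
  have hzero_out : ∀ c ∈ Finset.Ico (0:ℤ) n,
      c ∉ (Finset.Ico (0:ℤ) n).filter (fun c => h ∣ c) → (F c).card = 0 := by
    intro c hc hcf
    rw [Finset.card_eq_zero, ← Finset.not_nonempty_iff_eq_empty]
    intro hne
    exact hcf (Finset.mem_filter.mpr ⟨hc, hfiber_dvd c hne⟩)
  have hmultcard : (((Finset.Ico (0:ℤ) n).filter (fun c => h ∣ c)).card : ℤ) = n / h := by
    rw [hmult, Finset.card_image_of_injective _ (mul_right_injective₀ hgpos.ne'),
      Int.card_Ico, sub_zero, Int.toNat_of_nonneg hnhpos.le]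
  have hs : ((F 0).card : ℤ) = h := by
    have h1 : B.card = ∑ c ∈ (Finset.Ico (0:ℤ) n).filter (fun c => h ∣ c), (F c).card := by
      rw [← hcard_fib]
      exact (Finset.sum_subset (Finset.filter_subset _ _) hzero_out).symm
    have h2 : B.card = ((Finset.Ico (0:ℤ) n).filter (fun c => h ∣ c)).card * (F 0).card := by
      rw [h1, Finset.sum_congr rfl hcard_const, Finset.sum_const, smul_eq_mul]
    have hb : ((B.card : ℤ))
        = ((((Finset.Ico (0:ℤ) n).filter (fun c => h ∣ c)).card : ℤ)) * ((F 0).card : ℤ) := by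
      exact_mod_cast h2
    have h4 : (n / h) * ((F 0).card : ℤ) = (n / h) * h := by
      calc (n / h) * ((F 0).card : ℤ)
          = ((((Finset.Ico (0:ℤ) n).filter (fun c => h ∣ c)).card : ℤ)) * ((F 0).card : ℤ) := by
            rw [hmultcard]
        _ = (B.card : ℤ) := hb.symm
        _ = n := hcardB
        _ = (n / h) * h := by rw [mul_comm]; exact hndiv.symm
    exact mul_left_cancel₀ hnhpos.ne' h4
  -- key2 : the sum of residues
  have key2 : 2 * ∑ y ∈ B, T y % n = n * (n - h) := by
    rw [hsum_fib,
      ← Finset.sum_subset (Finset.filter_subset (fun c => h ∣ c) (Finset.Ico (0:ℤ) n))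
        (fun c hc hcf => by rw [hzero_out c hc hcf]; ring)]
    rw [Finset.sum_congr rfl (fun c hc => by
      rw [show ((F c).card : ℤ) = h by rw [hcard_const c hc, hs]])]
    rw [hmult, Finset.sum_image (fun a _ b _ hab => mul_right_injective₀ hgpos.ne' hab)]
    have hsum2 : ∑ j ∈ Finset.Ico (0:ℤ) (n / h), h * j * h
        = (h * h) * ∑ j ∈ Finset.Ico (0:ℤ) (n / h), j := by
      rw [Finset.mul_sum]
      exact Finset.sum_congr rfl fun j _ => by ring
    rw [hsum2]
    have hg := ecl_gauss (n / h) hnhpos.le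
    linear_combination (h * h) * hg + (h * (n / h) + n - h) * hndiv
  -- assemble
  have hN : 2 * (∑ y ∈ B, T y / n) = C - n + h := by
    apply mul_left_cancel₀ hn.ne'
    linear_combination key1 + e2 - key2
  have hCval : C = ((k : ℤ) - 1) * Q - (∑ i, Qi i) + n := by
    rw [hC_def]
    have h1 : ∑ i ∈ u, (q i - 1) * Qi i = ∑ i ∈ u, (Q - Qi i) := by
      refine Finset.sum_congr rfl fun i _ => ?_
      rw [sub_mul, one_mul, hQfact i]
    have h2 : ∑ i ∈ u, (Q - Qi i) = (u.card : ℤ) * Q - ∑ i ∈ u, Qi i := by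
      rw [Finset.sum_sub_distrib, Finset.sum_const, nsmul_eq_mul]
    have h3 : (u.card : ℤ) = (k : ℤ) - 1 := by
      rw [hu_def, Finset.card_erase_of_mem (Finset.mem_univ i0), Finset.card_univ,
        Fintype.card_fin]
      push_cast [hk]
      ring
    have h4 : ∑ i ∈ u, Qi i = (∑ i, Qi i) - n := by
      have := Finset.add_sum_erase Finset.univ Qi (Finset.mem_univ i0)
      rw [hu_def, hn_def]
      linarith
    rw [h1, h2, h3, h4]
    ring
  rw [hSeq, Set.ncard_coe_finset, hcardS, hN, hCval]
  ring
end

section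
/- Fix integers $m \ge 2$ and $n_1, \dots, n_m \ge 2$. Set $\mathcal{N} = n_1 \cdots n_m$, $\mathcal{N}_i = \mathcal{N}/n_i$, and $s = \gcd(\mathcal{N}_1, \dots, \mathcal{N}_m)$. Let $L \le \mathbb{Z}^m$ be the subgroup generated by the elements $n_1 e_1 - n_i e_i$ for $i = 2, \dots, m$, where $e_1, \dots, e_m$ is the standard basis. Then the torsion subgroup of the quotient group $\mathbb{Z}^m / L$ is finite of cardinality $s$, and the quotient of $\mathbb{Z}^m/L$ by its torsion subgroup is isomorphic to $\mathbb{Z}$. -/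
/-!
With weights `M i = (N / n i) / s`, which have gcd `1` and satisfy `n i * M i = N / s` for all
`i`, the map `v ↦ ∑ v i * M i` kills `L` and induces a surjection `ψ : ℤ^m / L → ℤ`. Its kernel
is the torsion subgroup, since `n i • e i ≡ n i0 • e i0` modulo `L` gives
`(N / s) • v ≡ ψ v • n i0 • e i0`. As `ψ (e i0) = M i0 ≠ 0`, the subgroup `⟨e i0⟩` meets `ker ψ`
trivially and `ker ψ + ⟨e i0⟩ = ψ⁻¹(M i0 ℤ)` has index `|M i0|`; hence
`|ker ψ| * |M i0| = [ℤ^m / L : ⟨e i0⟩] = ∏_{i ≠ i0} |n i| = |s| * |M i0|`.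
-/

open AddSubgroup Finset

section MapToInt

variable {G : Type*} [AddCommGroup G] (f : G →+ ℤ)

theorem AddCommGroup.torsion_eq_ker_of_zsmul_eq_zero {c : ℤ} (hc : c ≠ 0)
    (h : ∀ x ∈ f.ker, c • x = 0) : AddCommGroup.torsion G = f.ker := by
  ext x
  rw [AddCommGroup.mem_torsion, AddMonoidHom.mem_ker]
  refine ⟨fun hx => ?_, fun hx => isOfFinAddOrder_iff_zsmul_eq_zero.mpr ⟨c, hc, h x hx⟩⟩
  obtain ⟨k, hk, hkx⟩ := isOfFinAddOrder_iff_zsmul_eq_zero.mp hx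
  have : k * f x = 0 := by rw [← smul_eq_mul, ← map_zsmul, hkx, map_zero]
  exact (mul_eq_zero.mp this).resolve_left hk

theorem card_ker_mul_natAbs_eq_index_zmultiples (hf : Function.Surjective f) (g : G) :
    Nat.card f.ker * (f g).natAbs = (zmultiples g).index := by
  have hsup : f.ker ⊔ zmultiples g = (zmultiples (f g)).comap f := by
    rw [← AddMonoidHom.map_zmultiples, comap_map_eq, sup_comm]
  rw [← relIndex_mul_index (le_sup_right : zmultiples g ≤ f.ker ⊔ zmultiples g),
    relIndex_sup_right, hsup, index_comap_of_surjective _ hf, Int.index_zmultiples]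
  rcases eq_or_ne (f g) 0 with hg | hg
  · simp [hg]
  have hdisj : zmultiples g ⊓ f.ker = ⊥ := by
    refine eq_bot_iff.mpr fun x ⟨hx, hxf⟩ => ?_
    obtain ⟨k, rfl⟩ := mem_zmultiples_iff.mp hx
    simp_all
  rw [← inf_relIndex_right, hdisj, relIndex_bot_left]

end MapToInt

theorem Fintype.linearCombination_int_surjective {ι : Type*} [Fintype ι] {w : ι → ℤ}
    (h : univ.gcd w = 1) : Function.Surjective (Fintype.linearCombination ℤ w) := by
  obtain ⟨g, hg⟩ := Finset.gcd_eq_sum_mul univ w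
  refine fun k => ⟨k • g, ?_⟩
  simp_rw [map_smul, Fintype.linearCombination_apply, smul_eq_mul, mul_comm (g _), ← hg, h,
    mul_one]

section RelationLattice

variable {ι : Type*} [DecidableEq ι] (i0 : ι) (n : ι → ℤ)

def relLattice : AddSubgroup (ι → ℤ) :=
  closure {v | ∃ i : ι, i ≠ i0 ∧ v = Pi.single i0 (n i0) - Pi.single i (n i)}

theorem single_sub_single_mem_relLattice (i : ι) :
    Pi.single i0 (n i0) - Pi.single i (n i) ∈ relLattice i0 n := by
  rcases eq_or_ne i i0 with rfl | hi
  · rw [sub_self]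
    exact zero_mem _
  · exact subset_closure ⟨i, hi, rfl⟩

variable [Fintype ι]

theorem relLattice_sup_zmultiples_single_eq_pi :
    relLattice i0 n ⊔ zmultiples (Pi.single i0 1) =
      pi Set.univ fun i => zmultiples (Function.update n i0 1 i) := by
  apply le_antisymm
  · refine sup_le (closure_le _ |>.mpr ?_) (zmultiples_le.mpr ?_)
    · rintro _ ⟨i, -, rfl⟩
      rw [SetLike.mem_coe, AddSubgroup.mem_pi]
      rintro j -
      rcases eq_or_ne j i0 with rfl | hj
      · simp
      · rw [Pi.sub_apply, Pi.single_eq_of_ne hj, Function.update_of_ne hj, zero_sub,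
          neg_mem_iff, Int.mem_zmultiples_iff, Pi.single_apply]
        split_ifs with hji
        · exact hji ▸ dvd_rfl
        · exact dvd_zero _
    · rw [AddSubgroup.mem_pi]
      rintro j -
      rcases eq_or_ne j i0 with rfl | hj
      · simp
      · simp [hj]
  · intro v hv
    rw [← Finset.univ_sum_single v]
    refine sum_mem fun j _ => ?_
    rcases eq_or_ne j i0 with rfl | hj
    · refine mem_sup_right (mem_zmultiples_iff.mpr ⟨v j, ?_⟩)
      rw [← Pi.single_smul, smul_eq_mul, mul_one]
    · obtain ⟨k, hk⟩ := Int.mem_zmultiples_iff.mp (by simpa [hj] using hv j (Set.mem_univ j))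
      have hsingle : (Pi.single j (n j) : ι → ℤ) = n i0 • Pi.single i0 1 -
          (Pi.single i0 (n i0) - Pi.single j (n j)) := by
        rw [← Pi.single_smul, smul_eq_mul, mul_one, sub_sub_cancel]
      rw [hk, mul_comm, ← smul_eq_mul, Pi.single_smul, hsingle]
      exact zsmul_mem (sub_mem (mem_sup_right (zsmul_mem (mem_zmultiples _) _))
        (mem_sup_left (single_sub_single_mem_relLattice i0 n j))) k

theorem index_zmultiples_mk_single :
    (zmultiples (QuotientAddGroup.mk (Pi.single i0 1) : (ι → ℤ) ⧸ relLattice i0 n)).index =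
      ∏ i ∈ univ.erase i0, (n i).natAbs := by
  rw [← index_comap_of_surjective _ (QuotientAddGroup.mk'_surjective (relLattice i0 n)),
    ← QuotientAddGroup.coe_mk', ← AddMonoidHom.map_zmultiples, comap_map_eq,
    QuotientAddGroup.ker_mk', sup_comm, relLattice_sup_zmultiples_single_eq_pi, index_pi,
    ← mul_prod_erase univ _ (mem_univ i0)]
  simp_rw [Int.index_zmultiples, Function.update_self, Int.natAbs_one, one_mul]
  exact prod_congr rfl fun i hi => by rw [Function.update_of_ne (ne_of_mem_erase hi)]

variable {n} {w : ι → ℤ}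

theorem relLattice_le_ker_linearCombination (hw : ∀ i, n i * w i = n i0 * w i0) :
    relLattice i0 n ≤ (Fintype.linearCombination ℤ w).toAddMonoidHom.ker := by
  refine closure_le _ |>.mpr ?_
  rintro _ ⟨i, -, rfl⟩
  simp [hw i]

theorem zsmul_sub_linearCombination_smul_mem_relLattice (hw : ∀ i, n i * w i = n i0 * w i0)
    (v : ι → ℤ) :
    (n i0 * w i0) • v - Fintype.linearCombination ℤ w v • Pi.single i0 (n i0) ∈
      relLattice i0 n := by
  have hsum : (n i0 * w i0) • v - Fintype.linearCombination ℤ w v • Pi.single i0 (n i0) =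
      ∑ i, -(v i * w i) • (Pi.single i0 (n i0) - Pi.single i (n i)) := by
    nth_rw 1 [← univ_sum_single v]
    rw [Fintype.linearCombination_apply, smul_sum, sum_smul, ← sum_sub_distrib]
    refine sum_congr rfl fun i _ => ?_
    have hi : (n i0 * w i0) • (Pi.single i (v i) : ι → ℤ) = (v i * w i) • Pi.single i (n i) := by
      rw [← Pi.single_smul, ← Pi.single_smul, smul_eq_mul, smul_eq_mul, ← hw i]
      ring_nf
    rw [hi, smul_eq_mul, neg_smul, smul_sub]
    abel
  rw [hsum]
  exact sum_mem fun i _ => zsmul_mem (single_sub_single_mem_relLattice i0 n i) _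

def relLatticeWeight (hw : ∀ i, n i * w i = n i0 * w i0) : (ι → ℤ) ⧸ relLattice i0 n →+ ℤ :=
  QuotientAddGroup.lift _ (Fintype.linearCombination ℤ w).toAddMonoidHom
    (relLattice_le_ker_linearCombination i0 hw)

variable {i0}

theorem relLatticeWeight_mk (hw : ∀ i, n i * w i = n i0 * w i0) (v : ι → ℤ) :
    relLatticeWeight i0 hw v = Fintype.linearCombination ℤ w v :=
  rfl

theorem torsion_eq_ker_relLatticeWeight (hw : ∀ i, n i * w i = n i0 * w i0)
    (hc : n i0 * w i0 ≠ 0) :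
    AddCommGroup.torsion ((ι → ℤ) ⧸ relLattice i0 n) = (relLatticeWeight i0 hw).ker := by
  refine AddCommGroup.torsion_eq_ker_of_zsmul_eq_zero _ hc fun x hx => ?_
  induction x using QuotientAddGroup.induction_on with | H v =>
  have hmem := zsmul_sub_linearCombination_smul_mem_relLattice i0 hw v
  rw [← relLatticeWeight_mk hw, hx, zero_smul, sub_zero] at hmem
  rw [← QuotientAddGroup.mk_zsmul, QuotientAddGroup.eq_zero_iff]
  exact hmem

theorem relLatticeWeight_surjective (hw : ∀ i, n i * w i = n i0 * w i0) (hgcd : univ.gcd w = 1) :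
    Function.Surjective (relLatticeWeight i0 hw) := fun k =>
  let ⟨v, hv⟩ := Fintype.linearCombination_int_surjective hgcd k
  ⟨v, hv⟩

theorem card_torsion_mul_natAbs_eq_prod (hw : ∀ i, n i * w i = n i0 * w i0)
    (hc : n i0 * w i0 ≠ 0) (hgcd : univ.gcd w = 1) :
    Nat.card (AddCommGroup.torsion ((ι → ℤ) ⧸ relLattice i0 n)) * (w i0).natAbs =
      ∏ i ∈ univ.erase i0, (n i).natAbs := by
  rw [torsion_eq_ker_relLatticeWeight hw hc, ← index_zmultiples_mk_single,
    ← card_ker_mul_natAbs_eq_index_zmultiples _ (relLatticeWeight_surjective hw hgcd),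
    relLatticeWeight_mk, Fintype.linearCombination_apply_single, one_smul]

theorem card_torsion_eq_natAbs (hw : ∀ i, n i * w i = n i0 * w i0) (hc : n i0 * w i0 ≠ 0)
    (hgcd : univ.gcd w = 1) {t : ℤ} (ht : ∏ i ∈ univ.erase i0, n i = t * w i0) :
    Nat.card (AddCommGroup.torsion ((ι → ℤ) ⧸ relLattice i0 n)) = t.natAbs := by
  have habs : ∏ i ∈ univ.erase i0, (n i).natAbs = t.natAbs * (w i0).natAbs := by
    rw [← Int.natAbs_mul, ← ht]
    exact (map_prod Int.natAbsHom n _).symm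
  exact Nat.eq_of_mul_eq_mul_right (Int.natAbs_pos.mpr (right_ne_zero_of_mul hc))
    ((card_torsion_mul_natAbs_eq_prod hw hc hgcd).trans habs)

theorem nonempty_quotient_torsion_addEquiv_int (hw : ∀ i, n i * w i = n i0 * w i0)
    (hc : n i0 * w i0 ≠ 0) (hgcd : univ.gcd w = 1) :
    Nonempty ((((ι → ℤ) ⧸ relLattice i0 n) ⧸
      AddCommGroup.torsion ((ι → ℤ) ⧸ relLattice i0 n)) ≃+ ℤ) := by
  rw [torsion_eq_ker_relLatticeWeight hw hc]
  exact ⟨QuotientAddGroup.quotientKerEquivOfSurjective _ (relLatticeWeight_surjective hw hgcd)⟩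

end RelationLattice

theorem torsion_of_quotient_card_general (m : ℕ) (i0 : Fin m)
    (n : Fin m → ℤ) (hn : ∀ i, 2 ≤ n i)
    (N : ℤ) (hN : N = ∏ i, n i)
    (s : ℤ) (hs : s = Finset.gcd Finset.univ (fun i => N / n i))
    (L : AddSubgroup (Fin m → ℤ))
    (hL : L = AddSubgroup.closure
      {v | ∃ i : Fin m, i ≠ i0 ∧ v = Pi.single i0 (n i0) - Pi.single i (n i)}) :
    Finite (AddCommGroup.torsion ((Fin m → ℤ) ⧸ L)) ∧
    (Nat.card (AddCommGroup.torsion ((Fin m → ℤ) ⧸ L)) : ℤ) = s ∧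
    Nonempty ((((Fin m → ℤ) ⧸ L) ⧸ AddCommGroup.torsion ((Fin m → ℤ) ⧸ L)) ≃+ ℤ) := by
  change L = relLattice i0 n at hL
  subst hL
  have hn0 (i : Fin m) : n i ≠ 0 := by linarith [hn i]
  have hdvd (i : Fin m) : n i ∣ N := hN ▸ dvd_prod_of_mem n (mem_univ i)
  have hsdvd (i : Fin m) : s ∣ N / n i := hs ▸ gcd_dvd (mem_univ i)
  have hN0 : N / n i0 = ∏ i ∈ univ.erase i0, n i := by
    rw [hN, ← mul_prod_erase _ _ (mem_univ i0), Int.mul_ediv_cancel_left _ (hn0 i0)]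
  have hN0ne : N / n i0 ≠ 0 := hN0 ▸ prod_ne_zero_iff.mpr fun i _ => hn0 i
  have hsM : s * (N / n i0 / s) = N / n i0 := Int.mul_ediv_cancel' (hsdvd i0)
  have hsM0 : s * (N / n i0 / s) ≠ 0 := by rwa [hsM]
  have hw (i : Fin m) : n i * (N / n i / s) = n i0 * (N / n i0 / s) := by
    rw [← Int.mul_ediv_assoc _ (hsdvd i), ← Int.mul_ediv_assoc _ (hsdvd i0),
      Int.mul_ediv_cancel' (hdvd i), Int.mul_ediv_cancel' (hdvd i0)]
  have hc : n i0 * (N / n i0 / s) ≠ 0 := mul_ne_zero (hn0 i0) (right_ne_zero_of_mul hsM0)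
  have hgcd : univ.gcd (fun i => N / n i / s) = 1 := hs ▸ gcd_div_eq_one (mem_univ i0) hN0ne
  have hcard := card_torsion_eq_natAbs hw hc hgcd (hsM.trans hN0).symm
  refine ⟨Nat.finite_of_card_ne_zero ?_, ?_, nonempty_quotient_torsion_addEquiv_int hw hc hgcd⟩
  · rw [hcard, Int.natAbs_ne_zero]
    exact left_ne_zero_of_mul hsM0
  · rw [hcard, Int.natAbs_of_nonneg (hs ▸ Int.finsetGcd_nonneg)]

/-- Example 5.1(4) of Neumann–Wahl, "The End Curve Theorem for normal complex surface
singularities" (group-theoretic computation).  For integers `m ≥ 2` and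
`n 0, …, n (m-1) ≥ 2`, set `N = ∏ n i`, `Ni i = N / n i`, and
`s = gcd (Ni 0, …, Ni (m-1))`.  Let `L ≤ ℤ^m` be the subgroup generated by the
elements `n 0 • e 0 - n i • e i` for `i ≠ 0`.  Then the torsion subgroup of
`ℤ^m / L` is finite of cardinality `s`, and the quotient of `ℤ^m / L` by its
torsion subgroup is isomorphic to `ℤ`. -/
theorem torsion_of_quotient_card (m : ℕ) (hm : 2 ≤ m) (i0 : Fin m) (hi0 : (i0 : ℕ) = 0)
    (n : Fin m → ℤ) (hn : ∀ i, 2 ≤ n i)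
    (N : ℤ) (hN : N = ∏ i, n i)
    (s : ℤ) (hs : s = Finset.gcd Finset.univ (fun i => N / n i))
    (L : AddSubgroup (Fin m → ℤ))
    (hL : L = AddSubgroup.closure
      {v | ∃ i : Fin m, i ≠ i0 ∧ v = Pi.single i0 (n i0) - Pi.single i (n i)}) :
    Finite (AddCommGroup.torsion ((Fin m → ℤ) ⧸ L)) ∧
    (Nat.card (AddCommGroup.torsion ((Fin m → ℤ) ⧸ L)) : ℤ) = s ∧
    Nonempty ((((Fin m → ℤ) ⧸ L) ⧸ AddCommGroup.torsion ((Fin m → ℤ) ⧸ L)) ≃+ ℤ) :=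
  torsion_of_quotient_card_general m i0 n hn N hN s hs L hL
end

section
/- Fix integers $m \ge 2$ and $n_1, \dots, n_m \ge 2$. Set $\mathcal{N} = n_1 \cdots n_m$, $\mathcal{N}_i = \mathcal{N}/n_i$, and $s = \gcd(\mathcal{N}_1, \dots, \mathcal{N}_m)$. Let $C = \{ y \in \mathbb{C}^m : y_1^{n_1} = y_i^{n_i} \text{ for } i = 2, \dots, m \}$ and $G = C \setminus \{0\}$. Then: (a) every $y \in G$ has all coordinates nonzero, so $G \subseteq (\mathbb{C}^\times)^m$; (b) $G$ is a subgroup of $(\mathbb{C}^\times)^m$ under coordinatewise multiplication; and (c) the connected component of the identity $(1, \dots, 1)$ in $G$ (with the subspace topology from $\mathbb{C}^m$) is exactly the one-parameter subgroup $T = \{ (u^{\mathcal{N}_1/s}, \dots, u^{\mathcal{N}_m/s}) : u \in \mathbb{C}^\times \}$. -/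
/-!
Near `1`, each coordinate `y j` of a point of `G` is the principal `n j`-th root of the common
value `w = y j ^ n j`, because the other `n j`-th roots differ from it by a root of unity `≠ 1`;
hence `y = (u^(N₁/s), …, u^(Nₘ/s))` with `u` the principal `(N/s)`-th root of `w`. So the subgroup
`T` is a neighbourhood of `1` in the group `G`, hence relatively clopen in `G`, and it is connected
as an image of `ℂ^×`.
-/

open Complex Filter Topology

theorem connectedComponentIn_eq_of_eventually_mem_iff {X : Type*} [TopologicalSpace X]
    {S A : Set X} {x : X} (hAS : A ⊆ S) (hA : IsPreconnected A) (hx : x ∈ A)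
    (h : ∀ t ∈ S, ∀ᶠ z in 𝓝[S] t, z ∈ A ↔ t ∈ A) :
    connectedComponentIn S x = A := by
  classical
  refine subset_antisymm (fun y hy => ?_) (hA.subset_connectedComponentIn hx hAS)
  have hA_locallyConstant : ContinuousOn (fun z => decide (z ∈ A)) S := fun t ht => by
    simp only [ContinuousWithinAt, nhds_discrete, tendsto_pure]
    filter_upwards [h t ht] with z hz using by simp [hz]
  have := isPreconnected_connectedComponentIn.constant
    (hA_locallyConstant.mono (connectedComponentIn_subset S x))
    (mem_connectedComponentIn (hAS hx)) hy
  simpa [hx] using this.symm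

theorem Nat.div_div_mul_eq_div {N n s : ℕ} (hn : n ∣ N) (hs : s ∣ N / n) :
    N / n / s * n = N / s := by
  obtain ⟨l, rfl⟩ := hn
  rcases Nat.eq_zero_or_pos n with rfl | hn
  · simp
  obtain ⟨k, hk⟩ := hs
  rw [Nat.mul_div_cancel_left l hn] at hk
  subst hk
  rcases Nat.eq_zero_or_pos s with rfl | hs
  · simp
  rw [Nat.mul_div_cancel_left _ hn, Nat.mul_div_cancel_left _ hs, mul_left_comm,
    Nat.mul_div_cancel_left _ hs, mul_comm]

lemma Complex.eventually_pow_eq_one_imp_eq_one {n : ℕ} (hn : n ≠ 0) :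
    ∀ᶠ z in 𝓝 (1 : ℂ), z ^ n = 1 → z = 1 := by
  have hfin : {z : ℂ | z ^ n = 1 ∧ z ≠ 1}.Finite :=
    (Polynomial.nthRoots n (1 : ℂ)).toFinset.finite_toSet.subset fun z hz => by
      simpa [Polynomial.mem_nthRoots (Nat.pos_of_ne_zero hn)] using hz.1
  filter_upwards [hfin.isClosed.compl_mem_nhds (by simp)] with z hz hzn
  by_contra hz1
  exact hz ⟨hzn, hz1⟩

lemma Complex.exp_log_div_pow {w : ℂ} (hw : w ≠ 0) {n : ℕ} (hn : n ≠ 0) :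
    exp (log w / n) ^ n = w := by
  rw [← exp_nat_mul, mul_div_cancel₀ _ (Nat.cast_ne_zero.2 hn), exp_log hw]

lemma Complex.exp_div_pow {a n L : ℕ} (h : a * n = L) (hL : L ≠ 0) (w : ℂ) :
    exp (w / L) ^ a = exp (w / n) := by
  subst h
  have ha : (a : ℂ) ≠ 0 := Nat.cast_ne_zero.2 (left_ne_zero_of_mul hL)
  rw [← exp_nat_mul]
  push_cast
  field_simp

lemma Complex.eventually_eq_exp_log_pow_div {n : ℕ} (hn : n ≠ 0) :
    ∀ᶠ z in 𝓝 (1 : ℂ), z = exp (log (z ^ n) / n) := by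
  set r : ℂ → ℂ := fun z => exp (log (z ^ n) / n)
  have hr : ContinuousAt r 1 := by
    refine continuous_exp.continuousAt.comp ((ContinuousAt.clog ?_ ?_).div_const _)
    · exact (continuous_pow n).continuousAt
    · simp
  have hr1 : r 1 = 1 := by simp [r]
  have hquot : Tendsto (fun z => z / r z) (𝓝 1) (𝓝 1) := by
    have : ContinuousAt (fun z => z / r z) 1 := continuousAt_id.div hr (by simp [hr1])
    simpa [hr1] using this.tendsto
  filter_upwards [hquot.eventually (eventually_pow_eq_one_imp_eq_one hn),
    eventually_ne_nhds one_ne_zero] with z h hz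
  have hz' : z ^ n ≠ 0 := pow_ne_zero n hz
  refine ((div_eq_one_iff_eq (exp_ne_zero _)).1 (h ?_))
  rw [div_pow, exp_log_div_pow hz' hn, div_self hz']

section Curve

variable {ι : Type*} (n : ι → ℕ) (i₀ : ι)

def powCurve : Set (ι → ℂ) := {y | ∀ i, y i ^ n i = y i₀ ^ n i₀}

def monomialCurve (a : ι → ℕ) : Set (ι → ℂ) := (fun u : ℂ => fun j => u ^ a j) '' {0}ᶜ

variable {n i₀}

theorem powCurve_eq_setOf : powCurve n i₀ = {y | ∀ i, i ≠ i₀ → y i₀ ^ n i₀ = y i ^ n i} := by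
  ext y
  refine ⟨fun hy i _ => (hy i).symm, fun hy i => ?_⟩
  rcases eq_or_ne i i₀ with rfl | hi
  · rfl
  · exact (hy i hi).symm

theorem one_mem_powCurve : (1 : ι → ℂ) ∈ powCurve n i₀ := fun _ => by simp

theorem mul_mem_powCurve {y z : ι → ℂ} (hy : y ∈ powCurve n i₀) (hz : z ∈ powCurve n i₀) :
    y * z ∈ powCurve n i₀ := fun i => by
  simp only [Pi.mul_apply, mul_pow, hy i, hz i]

theorem inv_mem_powCurve {y : ι → ℂ} (hy : y ∈ powCurve n i₀) : y⁻¹ ∈ powCurve n i₀ := fun i => by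
  simp only [Pi.inv_apply, inv_pow, hy i]

theorem div_mem_powCurve {y z : ι → ℂ} (hy : y ∈ powCurve n i₀) (hz : z ∈ powCurve n i₀) :
    y / z ∈ powCurve n i₀ := by
  simpa only [div_eq_mul_inv] using mul_mem_powCurve hy (inv_mem_powCurve hz)

theorem apply_ne_zero_of_mem_powCurve (hn : ∀ i, n i ≠ 0) {y : ι → ℂ} (hy : y ∈ powCurve n i₀)
    (hy0 : y ≠ 0) (j : ι) : y j ≠ 0 := by
  intro hj
  have hi₀ : y i₀ = 0 := pow_eq_zero_iff (hn i₀) |>.1 <| by rw [← hy j, hj, zero_pow (hn j)]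
  refine hy0 (funext fun i => pow_eq_zero_iff (hn i) |>.1 ?_)
  rw [hy i, hi₀, zero_pow (hn i₀)]

variable {a : ι → ℕ}

theorem one_mem_monomialCurve : (1 : ι → ℂ) ∈ monomialCurve a :=
  ⟨1, one_ne_zero, funext fun _ => one_pow _⟩

theorem mul_mem_monomialCurve {y z : ι → ℂ} (hy : y ∈ monomialCurve a)
    (hz : z ∈ monomialCurve a) : y * z ∈ monomialCurve a := by
  obtain ⟨u, hu, rfl⟩ := hy
  obtain ⟨v, hv, rfl⟩ := hz
  exact ⟨u * v, mul_ne_zero hu hv, funext fun j => mul_pow u v (a j)⟩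

theorem inv_mem_monomialCurve {y : ι → ℂ} (hy : y ∈ monomialCurve a) : y⁻¹ ∈ monomialCurve a := by
  obtain ⟨u, hu, rfl⟩ := hy
  exact ⟨u⁻¹, inv_ne_zero hu, funext fun j => inv_pow u (a j)⟩

theorem apply_ne_zero_of_mem_monomialCurve {y : ι → ℂ} (hy : y ∈ monomialCurve a) (j : ι) :
    y j ≠ 0 := by
  obtain ⟨u, hu, rfl⟩ := hy
  exact pow_ne_zero _ hu

theorem isPreconnected_monomialCurve : IsPreconnected (monomialCurve a) :=
  (isConnected_compl_singleton_of_one_lt_rank (by simp) 0).isPreconnected.image _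
    (continuous_pi fun j => continuous_pow (a j)).continuousOn

theorem monomialCurve_subset_powCurve {L : ℕ} (hL : ∀ i, a i * n i = L) :
    monomialCurve a ⊆ powCurve n i₀ := by
  rintro _ ⟨u, -, rfl⟩ i
  simp only [← pow_mul, hL]

variable [Finite ι]

theorem eventually_mem_monomialCurve_of_mem_powCurve {L : ℕ} (hL : ∀ i, a i * n i = L)
    (hL0 : L ≠ 0) : ∀ᶠ y in 𝓝 (1 : ι → ℂ), y ∈ powCurve n i₀ → y ∈ monomialCurve a := by
  have hroot : ∀ᶠ y in 𝓝 (1 : ι → ℂ), ∀ j, y j = exp (log (y j ^ n j) / n j) :=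
    eventually_all.2 fun j => ((continuous_apply j).tendsto (1 : ι → ℂ)).eventually
      (eventually_eq_exp_log_pow_div (right_ne_zero_of_mul (hL j ▸ hL0)))
  filter_upwards [hroot] with y hy hyC
  refine ⟨exp (log (y i₀ ^ n i₀) / L), exp_ne_zero _, funext fun j => ?_⟩
  show _ ^ a j = _
  rw [exp_div_pow (hL j) hL0, ← hyC j, ← hy j]

theorem eventually_mem_monomialCurve_iff {L : ℕ} (hL : ∀ i, a i * n i = L) (hL0 : L ≠ 0)
    {t : ι → ℂ} (ht : t ∈ powCurve n i₀) (ht0 : ∀ j, t j ≠ 0) :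
    ∀ᶠ z in 𝓝[powCurve n i₀] t, z ∈ monomialCurve a ↔ t ∈ monomialCurve a := by
  have hdiv : Tendsto (· / t) (𝓝 t) (𝓝 1) := by
    have htt : t / t = 1 := funext fun j => div_self (ht0 j)
    simpa [htt] using (continuous_id.div_const t).tendsto t
  filter_upwards [self_mem_nhdsWithin, nhdsWithin_le_nhds
    (hdiv.eventually (eventually_mem_monomialCurve_of_mem_powCurve (i₀ := i₀) hL hL0))]
    with z hz hzt
  have hq : z / t ∈ monomialCurve a := hzt (div_mem_powCurve hz ht)
  constructor
  · intro hzT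
    have : t = z * (z / t)⁻¹ := funext fun j => by
      have := apply_ne_zero_of_mem_monomialCurve hzT j
      simp only [Pi.mul_apply, Pi.div_apply, inv_div]
      field_simp
    exact this ▸ mul_mem_monomialCurve hzT (inv_mem_monomialCurve hq)
  · intro htT
    have : z = z / t * t := funext fun j => by simp [ht0 j]
    exact this ▸ mul_mem_monomialCurve hq htT

end Curve

theorem curve_identity_component_general (m : ℕ) (i0 : Fin m)
    (n : Fin m → ℕ) (hn : ∀ i, 2 ≤ n i)
    (N : ℕ) (hN : N = ∏ i, n i)
    (s : ℕ) (hs : s = Finset.gcd Finset.univ (fun i => N / n i))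
    (C : Set (Fin m → ℂ))
    (hC : C = {y | ∀ i, i ≠ i0 → y i0 ^ n i0 = y i ^ n i})
    (G : Set (Fin m → ℂ)) (hG : G = C \ {0})
    (T : Set (Fin m → ℂ))
    (hT : T = {y | ∃ u : ℂ, u ≠ 0 ∧ y = fun j => u ^ (N / n j / s)}) :
    (∀ y ∈ G, ∀ j, y j ≠ 0) ∧
    ((1 : Fin m → ℂ) ∈ G) ∧
    (∀ y ∈ G, ∀ z ∈ G, y * z ∈ G) ∧
    (∀ y ∈ G, ∃ z ∈ G, y * z = 1) ∧
    connectedComponentIn G 1 = T := by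
  have hn0 : ∀ i, n i ≠ 0 := fun i => by have := hn i; omega
  have hdvd : ∀ j, n j ∣ N := fun j => hN ▸ Finset.dvd_prod_of_mem n (Finset.mem_univ j)
  have hsdvd : ∀ j, s ∣ N / n j := fun j => hs ▸ Finset.gcd_dvd (Finset.mem_univ j)
  have hexp : ∀ j, N / n j / s * n j = N / s := fun j =>
    Nat.div_div_mul_eq_div (hdvd j) (hsdvd j)
  have hN0 : N ≠ 0 := hN ▸ Finset.prod_ne_zero_iff.2 fun i _ => hn0 i
  have hsN : s ∣ N := (hsdvd i0).trans (Nat.div_dvd_of_dvd (hdvd i0))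
  have hL0 : N / s ≠ 0 := left_ne_zero_of_mul (b := s) (by rwa [Nat.div_mul_cancel hsN])
  rw [← powCurve_eq_setOf] at hC
  have hT' : T = monomialCurve fun j => N / n j / s := by
    rw [hT]; ext; simp [monomialCurve, eq_comm]
  subst hC hG hT'
  have hGnz : ∀ y ∈ powCurve n i0 \ {0}, ∀ j, y j ≠ 0 := fun y hy =>
    apply_ne_zero_of_mem_powCurve hn0 hy.1 hy.2
  have hTG : monomialCurve (fun j => N / n j / s) ⊆ powCurve n i0 \ {0} := fun y hy =>
    ⟨monomialCurve_subset_powCurve hexp hy,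
      Function.ne_iff.2 ⟨i0, apply_ne_zero_of_mem_monomialCurve hy i0⟩⟩
  refine ⟨hGnz, hTG one_mem_monomialCurve, fun y hy z hz => ⟨mul_mem_powCurve hy.1 hz.1, ?_⟩,
    fun y hy => ⟨y⁻¹, ⟨inv_mem_powCurve hy.1, ?_⟩, ?_⟩, ?_⟩
  · exact Function.ne_iff.2 ⟨i0, mul_ne_zero (hGnz y hy i0) (hGnz z hz i0)⟩
  · exact Function.ne_iff.2 ⟨i0, inv_ne_zero (hGnz y hy i0)⟩
  · exact funext fun j => mul_inv_cancel₀ (hGnz y hy j)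
  · exact connectedComponentIn_eq_of_eventually_mem_iff hTG isPreconnected_monomialCurve
      one_mem_monomialCurve fun t ht => nhdsWithin_mono _ Set.sdiff_subset
        (eventually_mem_monomialCurve_iff hexp hL0 ht.1 (hGnz t ht))

/-- Example 5.1(1)–(3) of Neumann–Wahl, "The End Curve Theorem for normal complex
surface singularities".  For integers `m ≥ 2` and `n 0, …, n (m-1) ≥ 2`, set
`N = ∏ n i`, `Ni i = N / n i`, `s = gcd (Ni 0, …, Ni (m-1))`.  Let
`C = {y ∈ ℂ^m : y 0 ^ n 0 = y i ^ n i for i ≠ 0}` and `G = C \ {0}`.  Then: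
(a) every `y ∈ G` has all coordinates nonzero (so `G ⊆ (ℂ^×)^m`);
(b) `G` is a subgroup of `(ℂ^×)^m` under coordinatewise multiplication
(it contains `1`, is closed under multiplication, and has inverses);
(c) the connected component of the identity `(1,…,1)` in `G` (subspace topology
from `ℂ^m`) is exactly the one-parameter subgroup
`T = {(u^(N 1 / s), …, u^(N m / s)) : u ∈ ℂ^×}`. -/
theorem curve_identity_component (m : ℕ) (hm : 2 ≤ m) (i0 : Fin m) (hi0 : (i0 : ℕ) = 0)
    (n : Fin m → ℕ) (hn : ∀ i, 2 ≤ n i)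
    (N : ℕ) (hN : N = ∏ i, n i)
    (s : ℕ) (hs : s = Finset.gcd Finset.univ (fun i => N / n i))
    (C : Set (Fin m → ℂ))
    (hC : C = {y | ∀ i, i ≠ i0 → y i0 ^ n i0 = y i ^ n i})
    (G : Set (Fin m → ℂ)) (hG : G = C \ {0})
    (T : Set (Fin m → ℂ))
    (hT : T = {y | ∃ u : ℂ, u ≠ 0 ∧ y = fun j => u ^ (N / n j / s)}) :
    (∀ y ∈ G, ∀ j, y j ≠ 0) ∧
    ((1 : Fin m → ℂ) ∈ G) ∧
    (∀ y ∈ G, ∀ z ∈ G, y * z ∈ G) ∧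
    (∀ y ∈ G, ∃ z ∈ G, y * z = 1) ∧
    connectedComponentIn G 1 = T :=
  curve_identity_component_general m i0 n hn N hN s hs C hC G hG T hT
end

section
/- Fix integers $m \ge 2$ and $n_1, \dots, n_m \ge 2$. Set $\mathcal{N} = n_1 \cdots n_m$, $\mathcal{N}_i = \mathcal{N}/n_i$, and $s = \gcd(\mathcal{N}_1, \dots, \mathcal{N}_m)$. Let $G = \{ y \in (\mathbb{C}^\times)^m : y_1^{n_1} = y_i^{n_i} \text{ for } i = 2, \dots, m \}$, a subgroup of $(\mathbb{C}^\times)^m$, and let $T = \{ (u^{\mathcal{N}_1/s}, \dots, u^{\mathcal{N}_m/s}) : u \in \mathbb{C}^\times \}$. Then $T$ is a subgroup of $G$, and the index $[G : T]$ is finite and equal to $s$; in particular the quotient group $G/T$ is a finite abelian group of order $s$. -/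
/-!
Put `a i = N / n i / s` and `L = N / s`, so that `a i * n i = L` for every `i` and the `a i` are
coprime. Then `T` is the image of the injective homomorphism `u ↦ (u ^ a i)ᵢ`, and
`K = ∏ μ_{n i}` has order `N`. Taking an `L`-th root of the common value of the `y i ^ n i`
shows `G = T ⊔ K`, so `[G : T] = [K : T ⊓ K]`; and `T ⊓ K` is the image of `μ_L`, of
order `L`. Hence `[G : T] = N / L = s`.
-/

open Subgroup Function

namespace IsAlgClosed

theorem exists_units_pow_eq {k : Type*} [Field k] [IsAlgClosed k] (c : kˣ) {L : ℕ} (hL : 0 < L) :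
    ∃ u : kˣ, u ^ L = c := by
  obtain ⟨z, hz⟩ := exists_pow_nat_eq (c : k) hL
  have hz0 : z ≠ 0 := by
    rintro rfl
    exact c.ne_zero (by rw [← hz, zero_pow hL.ne'])
  exact ⟨Units.mk0 z hz0, Units.ext (by simpa using hz)⟩

end IsAlgClosed

namespace Subgroup

theorem card_pi {ι : Type*} [Fintype ι] {G : ι → Type*} [∀ i, Group (G i)]
    (H : ∀ i, Subgroup (G i)) : Nat.card (pi Set.univ H) = ∏ i, Nat.card (H i) := by
  rw [← Nat.card_pi]
  exact Nat.card_congr (Equiv.Set.univPi fun i => (H i : Set (G i)))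

theorem relIndex_sup_mul_card_inf {G : Type*} [CommGroup G] (H K : Subgroup G) :
    H.relIndex (H ⊔ K) * Nat.card (H ⊓ K : Subgroup G) = Nat.card K := by
  rw [relIndex_sup_left, ← inf_relIndex_right, mul_comm, ← relIndex_bot_left,
    relIndex_mul_relIndex _ _ _ bot_le inf_le_right, relIndex_bot_left]

end Subgroup

section PowPi

variable {ι : Type*}

def powPiHom {M : Type*} [CommMonoid M] (a : ι → ℕ) : M →* ι → M :=
  MonoidHom.pi fun i => powMonoidHom (a i)

@[simp]
theorem powPiHom_apply {M : Type*} [CommMonoid M] (a : ι → ℕ) (u : M) (i : ι) :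
    powPiHom a u i = u ^ a i := rfl

theorem powPiHom_injective [Fintype ι] {G : Type*} [CommGroup G] {a : ι → ℕ}
    (ha : Finset.univ.gcd a = 1) : Injective (powPiHom a : G →* ι → G) := by
  refine (injective_iff_map_eq_one _).mpr fun u hu => ?_
  have hdvd : orderOf u ∣ Finset.univ.gcd a :=
    Finset.dvd_gcd fun i _ => orderOf_dvd_of_pow_eq_one (congrFun hu i)
  rwa [ha, Nat.dvd_one, orderOf_eq_one_iff] at hdvd

variable {a n : ι → ℕ} {L : ℕ}

theorem comap_powPiHom_pi_rootsOfUnity {R : Type*} [CommMonoid R] [Nonempty ι]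
    (h : ∀ i, a i * n i = L) :
    (pi Set.univ fun i => rootsOfUnity (n i) R).comap (powPiHom a) = rootsOfUnity L R := by
  ext u
  simp only [mem_comap, mem_pi, Set.mem_univ, true_implies, mem_rootsOfUnity, powPiHom_apply,
    ← pow_mul, h]
  exact forall_const ι

theorem card_range_powPiHom_inf_pi_rootsOfUnity {R : Type*} [CommMonoid R] [Fintype ι]
    (ha : Finset.univ.gcd a = 1) (h : ∀ i, a i * n i = L) :
    Nat.card ((powPiHom a).range ⊓ pi Set.univ fun i => rootsOfUnity (n i) R : Subgroup _) =
      Nat.card (rootsOfUnity L R) := by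
  have : Nonempty ι := by
    by_contra hι
    simp [not_nonempty_iff.mp hι] at ha
  rw [← map_comap_eq, comap_powPiHom_pi_rootsOfUnity h,
    card_map_of_injective (powPiHom_injective ha)]

theorem mem_range_powPiHom_sup_pi_rootsOfUnity_iff {F : Type*} [Field F] [IsAlgClosed F]
    (h : ∀ i, a i * n i = L) (hL : 0 < L) (i₀ : ι) {y : ι → Fˣ} :
    y ∈ (powPiHom a).range ⊔ pi Set.univ (fun i => rootsOfUnity (n i) F) ↔
      ∀ i, y i ^ n i = y i₀ ^ n i₀ := by
  rw [mem_sup]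
  constructor
  · rintro ⟨_, ⟨u, rfl⟩, z, hz, rfl⟩ i
    have hpow : ∀ j, (powPiHom a u * z) j ^ n j = u ^ L := fun j => by
      rw [Pi.mul_apply, mul_pow, powPiHom_apply, ← pow_mul, h,
        (mem_rootsOfUnity _ _).mp (hz j trivial), mul_one]
    rw [hpow, hpow]
  · intro hy
    obtain ⟨u, hu⟩ := IsAlgClosed.exists_units_pow_eq (y i₀ ^ n i₀) hL
    refine ⟨_, ⟨u, rfl⟩, (powPiHom a u)⁻¹ * y, fun i _ => (mem_rootsOfUnity _ _).mpr ?_,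
      mul_inv_cancel_left _ _⟩
    rw [Pi.mul_apply, Pi.inv_apply, mul_pow, inv_pow, powPiHom_apply, ← pow_mul, h, hu, hy i,
      inv_mul_cancel]

theorem relIndex_range_powPiHom_sup_mul [Fintype ι] [NeZero L] [∀ i, NeZero (n i)]
    (ha : Finset.univ.gcd a = 1) (h : ∀ i, a i * n i = L) :
    (powPiHom a : ℂˣ →* _).range.relIndex
        ((powPiHom a).range ⊔ pi Set.univ fun i => rootsOfUnity (n i) ℂ) * L = ∏ i, n i := by
  have := relIndex_sup_mul_card_inf (powPiHom a : ℂˣ →* _).range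
    (pi Set.univ fun i => rootsOfUnity (n i) ℂ)
  simpa only [card_range_powPiHom_inf_pi_rootsOfUnity ha h, card_pi, Complex.card_rootsOfUnity]
    using this

end PowPi

theorem index_of_identity_component_general (m : ℕ) (i0 : Fin m)
    (n : Fin m → ℕ) (hn : ∀ i, 2 ≤ n i)
    (N : ℕ) (hN : N = ∏ i, n i)
    (s : ℕ) (hs : s = Finset.gcd Finset.univ (fun i => N / n i)) :
    ∃ G T : Subgroup (Fin m → ℂˣ),
      (G : Set (Fin m → ℂˣ)) = {y | ∀ i, i ≠ i0 → y i0 ^ n i0 = y i ^ n i} ∧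
      (T : Set (Fin m → ℂˣ)) = {y | ∃ u : ℂˣ, y = fun j => u ^ (N / n j / s)} ∧
      T ≤ G ∧ (T.subgroupOf G).FiniteIndex ∧ T.relIndex G = s ∧
      Nat.card (↥G ⧸ T.subgroupOf G) = s := by
  have hn0 : ∀ i, NeZero (n i) := fun i => ⟨by have := hn i; omega⟩
  have hN0 : 0 < N := hN ▸ Finset.prod_pos fun i _ => Nat.pos_of_neZero (n i)
  have hdvd : ∀ i, n i ∣ N := fun i => hN ▸ Finset.dvd_prod_of_mem n (Finset.mem_univ i)
  have hNi : ∀ i, N / n i ≠ 0 := fun i =>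
    (Nat.div_pos (Nat.le_of_dvd hN0 (hdvd i)) (Nat.pos_of_neZero _)).ne'
  have hsdvd : ∀ i, s ∣ N / n i := fun i => hs ▸ Finset.gcd_dvd (Finset.mem_univ i)
  have hs0 : s ≠ 0 := fun h0 => hNi i0 (Nat.eq_zero_of_zero_dvd (h0 ▸ hsdvd i0))
  have hgcd : Finset.univ.gcd (fun i => N / n i / s) = 1 :=
    hs ▸ Finset.gcd_div_eq_one (Finset.mem_univ i0) (hNi i0)
  have hL : ∀ i, N / n i / s * n i = N / s := fun i => by
    rw [Nat.div_mul_right_comm (hsdvd i), Nat.div_mul_cancel (hdvd i)]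
  have hLs : N / s * s = N := Nat.div_mul_cancel ((hsdvd i0).trans (Nat.div_dvd_of_dvd (hdvd i0)))
  have hL0 : NeZero (N / s) := ⟨fun h0 => hN0.ne' (by rw [← hLs, h0, zero_mul])⟩
  have hindex := Nat.eq_of_mul_eq_mul_right (Nat.pos_of_neZero (N / s))
    ((relIndex_range_powPiHom_sup_mul (n := n) hgcd hL).trans (by rw [← hN, mul_comm, hLs]))
  refine ⟨_, _, ?_, ?_, le_sup_left, ⟨hindex.trans_ne hs0⟩, hindex,
    (index_eq_card _).symm.trans hindex⟩
  · ext y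
    rw [SetLike.mem_coe, mem_range_powPiHom_sup_pi_rootsOfUnity_iff hL (Nat.pos_of_neZero _) i0]
    refine ⟨fun hy i _ => (hy i).symm, fun hy i => ?_⟩
    rcases eq_or_ne i i0 with rfl | hi
    · rfl
    · exact (hy i hi).symm
  · ext y
    exact exists_congr fun u => eq_comm

/-- Example 5.1(4) of Neumann–Wahl, "The End Curve Theorem for normal complex surface
singularities".  For integers `m ≥ 2` and `n 0, …, n (m-1) ≥ 2`, set `N = ∏ n i`,
`Ni i = N / n i`, `s = gcd (Ni 0, …, Ni (m-1))`.  Inside the torus `(ℂ^×)^m`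
(with coordinatewise multiplication) let `G` be the subgroup
`{y : y 0 ^ n 0 = y i ^ n i for i ≠ 0}` and `T` the one-parameter subgroup
`{(u^(Ni 0 / s), …, u^(Ni (m-1) / s)) : u ∈ ℂ^×}`.  Then `T ≤ G`, the index
`[G : T]` is finite and equal to `s`; in particular the quotient group `G/T` is a
finite (abelian) group of order `s`. -/
theorem index_of_identity_component (m : ℕ) (hm : 2 ≤ m) (i0 : Fin m) (hi0 : (i0 : ℕ) = 0)
    (n : Fin m → ℕ) (hn : ∀ i, 2 ≤ n i)
    (N : ℕ) (hN : N = ∏ i, n i)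
    (s : ℕ) (hs : s = Finset.gcd Finset.univ (fun i => N / n i)) :
    ∃ G T : Subgroup (Fin m → ℂˣ),
      (G : Set (Fin m → ℂˣ)) = {y | ∀ i, i ≠ i0 → y i0 ^ n i0 = y i ^ n i} ∧
      (T : Set (Fin m → ℂˣ)) = {y | ∃ u : ℂˣ, y = fun j => u ^ (N / n j / s)} ∧
      T ≤ G ∧ (T.subgroupOf G).FiniteIndex ∧ T.relIndex G = s ∧
      Nat.card (↥G ⧸ T.subgroupOf G) = s :=
  index_of_identity_component_general m i0 n hn N hN s hs
end

section
/- Fix integers $m \ge 2$ and $n_1, \dots, n_m \ge 2$. Set $\mathcal{N} = n_1 \cdots n_m$, $\mathcal{N}_i = \mathcal{N}/n_i$, and $s = \gcd(\mathcal{N}_1, \dots, \mathcal{N}_m)$. Let $\hat{G} = \mathbb{Z}^m / L$, where $L$ is the subgroup of $\mathbb{Z}^m$ generated by $n_1 e_1 - n_i e_i$ for $i = 2, \dots, m$, and let $w : \hat{G} \to \mathbb{Z}$ be the homomorphism induced by $e_i \mapsto \mathcal{N}_i / s$ (this is well defined since $n_1 \mathcal{N}_1 = n_i \mathcal{N}_i$).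 Let $S \subseteq \hat{G}$ be the image of $\mathbb{N}^m$ under the quotient map. Then the gap set $\{ g \in \hat{G} : w(g) \ge 0 \} \setminus S$ is finite, and its cardinality $\delta$ satisfies $2\delta = (m-1)\mathcal{N} - \sum_{i=1}^m \mathcal{N}_i + s$. -/
/-!
Write `N_j = ∏_{k ≠ j} n_k` and `d = N_{i0}`. Every class of `ℤ^m / L` has a unique
representative `x` with `0 ≤ x_j < n_j` for `j ≠ i0`; it lies in `S` iff `x_{i0} ≥ 0`, and
`s • w` is the degree `x ↦ ∑ x_j N_j`. Recording the residues `p_j = x_j mod n_j` and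
`f p = ∑_{j ≠ i0} p_j N_j`, the gaps with residues `p` are those with `-f p / d ≤ x_{i0} < 0`,
so `δ = ∑_p ⌊f p / d⌋`. The reflection `p ↦ -1 - p` gives `2 ∑ f = d ∑_{j ≠ i0} (n_j - 1) N_j`,
and the negation `p ↦ -p` gives `2 ∑ (f mod d) = d (d - K)`, where `K` counts the `p` with
`d ∣ f p`. Finally `p ↦ f p mod d` is a homomorphism `∏_{j ≠ i0} ℤ/n_j → ℤ/d` whose image is
generated by `gcd_{j ≠ i0} N_j`, so `K = gcd(d, N_j : j ≠ i0) = s`.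
-/

open Finset

lemma Finset.gcd_univ_eq_gcd_subtype_ne {α ι : Type*} [CommMonoidWithZero α]
    [NormalizedGCDMonoid α] [Fintype ι] [DecidableEq ι] (f : ι → α) (a : ι) :
    univ.gcd f = GCDMonoid.gcd (f a) (univ.gcd fun i : {i // i ≠ a} => f i) := by
  have himage : (univ : Finset {i // i ≠ a}).image Subtype.val = univ.erase a := by
    ext; simp
  rw [← Finset.insert_erase (mem_univ a), Finset.gcd_insert, ← himage, Finset.gcd_image]
  rfl

lemma Int.emod_add_emod_of_dvd_add {a b d : ℤ} (hd : 0 < d) (hab : d ∣ a + b) :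
    a % d + b % d = if d ∣ a then 0 else d := by
  split_ifs with ha
  · rw [Int.emod_eq_zero_of_dvd ha, Int.emod_eq_zero_of_dvd ((dvd_add_right ha).1 hab), add_zero]
  · have ha' : 0 < a % d := lt_of_le_of_ne (Int.emod_nonneg a hd.ne')
      (fun h => ha (Int.dvd_of_emod_eq_zero h.symm))
    obtain ⟨k, hk⟩ : d ∣ a % d + b % d := by
      rw [Int.dvd_iff_emod_eq_zero, ← Int.add_emod, ← Int.dvd_iff_emod_eq_zero]; exact hab
    have hk0 : 0 < k := pos_of_mul_pos_right (hk ▸ add_pos_of_pos_of_nonneg ha'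
      (Int.emod_nonneg b hd.ne')) hd.le
    have hk2 : k < 2 := by
      have := Int.emod_lt_of_pos a hd
      have := Int.emod_lt_of_pos b hd
      nlinarith
    obtain rfl : k = 1 := by omega
    rw [hk, mul_one]

lemma ZMod.val_neg_one_sub {n : ℕ} [NeZero n] (a : ZMod n) :
    ((-1 - a).val : ℤ) = n - 1 - a.val := by
  have hlt := a.val_lt
  have h : -1 - a = ((n - 1 - a.val : ℕ) : ZMod n) := by
    rw [Nat.cast_sub (by omega), Nat.cast_sub (NeZero.one_le), ZMod.natCast_self,
      ZMod.natCast_zmod_val, Nat.cast_one, zero_sub]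
  rw [h, ZMod.val_cast_of_lt (by omega)]
  omega

namespace ResidueBox

variable {κ : Type*} [Fintype κ] (n : κ → ℕ) (c : κ → ℤ)

def weightedSum (p : ∀ j, ZMod (n j)) : ℤ := ∑ j, (p j).val * c j

lemma two_mul_sum_weightedSum [DecidableEq κ] [∀ j, NeZero (n j)] :
    2 * ∑ p, weightedSum n c p = (∏ j, (n j : ℤ)) * ∑ j, ((n j : ℤ) - 1) * c j := by
  have hpair : ∀ p, weightedSum n c p + weightedSum n c (-1 - p)
      = ∑ j, ((n j : ℤ) - 1) * c j := fun p => by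
    simp only [weightedSum, ← Finset.sum_add_distrib, Pi.sub_apply, Pi.neg_apply, Pi.one_apply,
      ZMod.val_neg_one_sub]
    exact Finset.sum_congr rfl fun j _ => by ring
  have hreflect : ∑ p, weightedSum n c (-1 - p) = ∑ p, weightedSum n c p :=
    Equiv.sum_comp (Equiv.subLeft (-1)) _
  calc 2 * ∑ p, weightedSum n c p = ∑ p, (weightedSum n c p + weightedSum n c (-1 - p)) := by
        rw [Finset.sum_add_distrib, hreflect]; ring
    _ = _ := by
        simp only [hpair, Finset.sum_const, Finset.card_univ, Fintype.card_pi, ZMod.card,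
          nsmul_eq_mul]
        push_cast; rfl

def residueHom (d : ℕ) (hc : ∀ j, (d : ℤ) ∣ n j * c j) : (∀ j, ZMod (n j)) →+ ZMod d :=
  ∑ j, (ZMod.lift (n j) ⟨c j • Int.castAddHom (ZMod d), by
      have := (ZMod.intCast_zmod_eq_zero_iff_dvd _ d).2 (hc j)
      push_cast at this
      simpa [mul_comm] using this⟩).comp
    (Pi.evalAddMonoidHom (fun j => ZMod (n j)) j)

variable {d : ℕ} (hc : ∀ j, (d : ℤ) ∣ n j * c j)

lemma residueHom_intCast (b : κ → ℤ) :
    residueHom n c d hc (fun j => (b j : ZMod (n j))) = ((∑ j, c j * b j : ℤ) : ZMod d) := by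
  simp [residueHom, ZMod.lift_coe]

lemma residueHom_apply [∀ j, NeZero (n j)] (p : ∀ j, ZMod (n j)) :
    residueHom n c d hc p = (weightedSum n c p : ZMod d) := by
  have hp : p = fun j => (((p j).val : ℤ) : ZMod (n j)) := by
    ext j; simp
  conv_lhs => rw [hp]
  rw [residueHom_intCast, weightedSum]
  simp_rw [mul_comm (c _)]

lemma range_residueHom [∀ j, NeZero (n j)] :
    (residueHom n c d hc).range = AddSubgroup.zmultiples ((univ.gcd c : ℤ) : ZMod d) := by
  ext z
  simp only [AddMonoidHom.mem_range, AddSubgroup.mem_zmultiples_iff]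
  constructor
  · rintro ⟨p, rfl⟩
    obtain ⟨k, hk⟩ : univ.gcd c ∣ weightedSum n c p :=
      Finset.dvd_sum fun j _ => (Finset.gcd_dvd (mem_univ j)).mul_left _
    exact ⟨k, by rw [residueHom_apply, hk, zsmul_eq_mul]; push_cast; ring⟩
  · rintro ⟨k, rfl⟩
    obtain ⟨b, hb⟩ := Finset.gcd_eq_sum_mul univ c
    refine ⟨fun j => ((k * b j : ℤ) : ZMod (n j)), ?_⟩
    rw [residueHom_intCast, hb, zsmul_eq_mul, ← Int.cast_mul, Finset.mul_sum]
    exact congrArg _ (Finset.sum_congr rfl fun j _ => by ring)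

lemma card_ker_residueHom_mul [DecidableEq κ] [∀ j, NeZero (n j)] [NeZero d] :
    Nat.card (residueHom n c d hc).ker * (d / Int.gcd d (univ.gcd c)) = ∏ j, n j := by
  have hg : univ.gcd c = ((univ.gcd c).natAbs : ℤ) :=
    (Int.natAbs_of_nonneg (Int.nonneg_of_normalize_eq_self Finset.normalize_gcd)).symm
  have hcard : ∏ j, n j = Nat.card (∀ j, ZMod (n j)) := by simp
  rw [hcard, ← AddSubgroup.card_mul_index (residueHom n c d hc).ker, AddSubgroup.index_ker,
    range_residueHom, Nat.card_zmultiples, hg, Int.cast_natCast,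
    ZMod.addOrderOf_coe _ (NeZero.ne d)]
  rfl

lemma two_mul_sum_weightedSum_emod [DecidableEq κ] [∀ j, NeZero (n j)] [NeZero d] :
    2 * ∑ p, weightedSum n c p % d
      = d * ((∏ j, (n j : ℤ)) - Nat.card (residueHom n c d hc).ker) := by
  have hd : (0 : ℤ) < d := by exact_mod_cast Nat.pos_of_neZero d
  have hpair : ∀ p, weightedSum n c p % d + weightedSum n c (-p) % d
      = if residueHom n c d hc p = 0 then 0 else (d : ℤ) := by
    intro p
    refine (Int.emod_add_emod_of_dvd_add hd ?_).trans ?_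
    · rw [← ZMod.intCast_zmod_eq_zero_iff_dvd, Int.cast_add, ← residueHom_apply n c hc,
        ← residueHom_apply n c hc, map_neg, add_neg_cancel]
    · simp only [residueHom_apply n c hc, ZMod.intCast_zmod_eq_zero_iff_dvd]
  have hneg : ∑ p, weightedSum n c (-p) % d = ∑ p, weightedSum n c p % d :=
    Equiv.sum_comp (Equiv.neg _) (fun p => weightedSum n c p % d)
  have hker : Nat.card (residueHom n c d hc).ker
      = (univ.filter fun p => residueHom n c d hc p = 0).card := by
    rw [← Fintype.card_subtype, ← Nat.card_eq_fintype_card]; rfl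
  calc 2 * ∑ p, weightedSum n c p % d
      = ∑ p, (weightedSum n c p % d + weightedSum n c (-p) % d) := by
        rw [Finset.sum_add_distrib, hneg]; ring
    _ = d * ((∏ j, (n j : ℤ)) - Nat.card (residueHom n c d hc).ker) := by
        rw [Finset.sum_congr rfl fun p _ => hpair p, Finset.sum_ite, Finset.sum_const_zero,
          zero_add, Finset.sum_const, nsmul_eq_mul, hker,
          Finset.filter_not, Finset.card_sdiff_of_subset (Finset.filter_subset _ _),
          Nat.cast_sub (Finset.card_le_card (Finset.filter_subset _ _))]
        simp
        ring

lemma card_ker_residueHom [DecidableEq κ] [∀ j, NeZero (n j)] [NeZero d] (hd : ∏ j, n j = d) :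
    Nat.card (residueHom n c d hc).ker = Int.gcd d (univ.gcd c) := by
  have hg : Int.gcd d (univ.gcd c) ∣ d := Nat.gcd_dvd_left d _
  have hpos : 0 < d / Int.gcd d (univ.gcd c) :=
    Nat.div_pos (Nat.le_of_dvd (Nat.pos_of_neZero d) hg)
      (Nat.gcd_pos_of_pos_left _ (Nat.pos_of_neZero d))
  refine Nat.eq_of_mul_eq_mul_right hpos ?_
  rw [card_ker_residueHom_mul, hd, Nat.mul_div_cancel' hg]

lemma two_mul_sum_weightedSum_div [DecidableEq κ] [∀ j, NeZero (n j)] [NeZero d]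
    (hc : ∀ j, (d : ℤ) ∣ n j * c j) (hd : ∏ j, n j = d) :
    2 * ∑ p, weightedSum n c p / d
      = ∑ j, ((n j : ℤ) - 1) * c j - d + Int.gcd d (univ.gcd c) := by
  have hd0 : (d : ℤ) ≠ 0 := by exact_mod_cast NeZero.ne d
  have hdZ : ∏ j, (n j : ℤ) = d := by exact_mod_cast hd
  refine mul_left_cancel₀ hd0 ?_
  have hsplit : ∑ p, weightedSum n c p
      = d * ∑ p, weightedSum n c p / d + ∑ p, weightedSum n c p % d := by
    rw [Finset.mul_sum, ← Finset.sum_add_distrib]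
    exact Finset.sum_congr rfl fun p _ => (Int.mul_ediv_add_emod _ _).symm
  have h1 := two_mul_sum_weightedSum n c
  have h2 := two_mul_sum_weightedSum_emod n c hc
  rw [card_ker_residueHom n c hc hd, hdZ] at *
  linear_combination h1 - h2 - 2 * hsplit

end ResidueBox

namespace MonomialCurve

open ResidueBox

variable {ι : Type*} [DecidableEq ι] (i0 : ι) (n : ι → ℕ)

def lattice : AddSubgroup (ι → ℤ) :=
  AddSubgroup.closure
    {v | ∃ i, i ≠ i0 ∧ v = Pi.single i0 (n i0 : ℤ) - Pi.single i (n i : ℤ)}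

lemma lattice_le_ker {A : Type*} [AddCommGroup A] (φ : (ι → ℤ) →+ A)
    (hφ : ∀ i, φ (Pi.single i (n i)) = φ (Pi.single i0 (n i0))) : lattice i0 n ≤ φ.ker :=
  (AddSubgroup.closure_le _).2 <| by
    rintro v ⟨i, -, rfl⟩
    simp [hφ i]

def valueSemigroup : Set ((ι → ℤ) ⧸ lattice i0 n) :=
  QuotientAddGroup.mk '' {x | ∀ i, 0 ≤ x i}

abbrev Residues := ∀ j : {j // j ≠ i0}, ZMod (n j)

def normalVec (p : Residues i0 n) (t : ℤ) : ι → ℤ :=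
  fun j => if h : j = i0 then t else (p ⟨j, h⟩).val

variable [Fintype ι]

def cofactor (i : ι) : ℕ := ∏ j : {j // j ≠ i}, n j

lemma prod_eq_mul_cofactor (i : ι) : ∏ j, n j = n i * cofactor n i :=
  Fintype.prod_eq_mul_prod_subtype_ne _ _

instance [∀ i, NeZero (n i)] (i : ι) : NeZero (cofactor n i) :=
  ⟨Finset.prod_ne_zero_iff.2 fun j _ => NeZero.ne (n j)⟩

lemma cofactor_dvd_mul_cofactor (i j : ι) : (cofactor n i : ℤ) ∣ n j * cofactor n j :=
  ⟨n i, by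
    rw [mul_comm (cofactor n i : ℤ)]
    exact_mod_cast (prod_eq_mul_cofactor n j).symm.trans (prod_eq_mul_cofactor n i)⟩

def degree : (ι → ℤ) →+ ℤ where
  toFun x := ∑ i, x i * cofactor n i
  map_zero' := by simp
  map_add' x y := by simp [add_mul, Finset.sum_add_distrib]

lemma degree_apply (x : ι → ℤ) : degree n x = ∑ i, x i * cofactor n i := rfl

lemma degree_single (i : ι) (t : ℤ) : degree n (Pi.single i t) = t * cofactor n i := by
  simp [degree, Pi.single_apply]

lemma lattice_le_ker_degree : lattice i0 n ≤ (degree n).ker :=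
  lattice_le_ker i0 n _ fun i => by
    simp only [degree_single]
    exact_mod_cast (prod_eq_mul_cofactor n i).symm.trans (prod_eq_mul_cofactor n i0)

def quotDegree : (ι → ℤ) ⧸ lattice i0 n →+ ℤ :=
  QuotientAddGroup.lift _ (degree n) (lattice_le_ker_degree i0 n)

def gaps : Set ((ι → ℤ) ⧸ lattice i0 n) :=
  {g | 0 ≤ quotDegree i0 n g} \ valueSemigroup i0 n

def residueDegree (p : Residues i0 n) : ℤ :=
  weightedSum (fun j : {j // j ≠ i0} => n j) (fun j => cofactor n j) p

lemma degree_normalVec (p : Residues i0 n) (t : ℤ) :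
    degree n (normalVec i0 n p t) = t * cofactor n i0 + residueDegree i0 n p := by
  rw [degree_apply, Fintype.sum_eq_add_sum_subtype_ne _ i0]
  simp only [normalVec, dif_pos, residueDegree, weightedSum]
  exact congrArg _ (Finset.sum_congr rfl fun j _ => by rw [dif_neg j.2])

lemma mk_eq_mk_normalVec [∀ i, NeZero (n i)] (x : ι → ℤ) :
    (x : (ι → ℤ) ⧸ lattice i0 n) = normalVec i0 n (fun j => (x j : ZMod (n j)))
      (x i0 + n i0 * ∑ j : {j // j ≠ i0}, x j / n j) := by
  rw [QuotientAddGroup.eq]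
  have hdiff : -x + normalVec i0 n (fun j => (x j : ZMod (n j)))
        (x i0 + n i0 * ∑ j : {j // j ≠ i0}, x j / n j)
      = ∑ j : {j // j ≠ i0},
          (x j / n j) • (Pi.single i0 (n i0 : ℤ) - Pi.single (j : ι) (n j : ℤ)) := by
    ext k
    by_cases hk : k = i0
    · subst hk
      simp only [normalVec, Pi.add_apply, Pi.neg_apply, dif_pos, Finset.sum_apply, Pi.smul_apply,
        Pi.sub_apply, Pi.single_eq_same, smul_eq_mul, Finset.mul_sum, neg_add_cancel_left]
      exact Finset.sum_congr rfl fun j _ => by rw [Pi.single_eq_of_ne (Ne.symm j.2)]; ring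
    · simp only [normalVec, dif_neg hk, Pi.add_apply, Pi.neg_apply, ZMod.val_intCast,
        Finset.sum_apply, Pi.smul_apply, Pi.sub_apply, Pi.single_eq_of_ne hk, smul_eq_mul]
      rw [Fintype.sum_eq_single ⟨k, hk⟩ fun j hj => by
        rw [Pi.single_eq_of_ne (fun h => hj (Subtype.ext h.symm)), sub_zero, mul_zero]]
      rw [Pi.single_eq_same, Int.emod_def]
      ring
  rw [hdiff]
  exact AddSubgroup.sum_mem _ fun j _ => AddSubgroup.zsmul_mem _
    (AddSubgroup.subset_closure (by exact ⟨j, j.2, rfl⟩)) _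

lemma eq_of_mk_normalVec_eq [∀ i, NeZero (n i)] {p p' : Residues i0 n} {t t' : ℤ}
    (h : (normalVec i0 n p t : (ι → ℤ) ⧸ lattice i0 n) = normalVec i0 n p' t') :
    p = p' ∧ t = t' := by
  have hmem := QuotientAddGroup.eq.1 h
  obtain rfl : p = p' := by
    funext j
    let φ := (Int.castAddHom (ZMod (n j))).comp (Pi.evalAddMonoidHom (fun _ => ℤ) (j : ι))
    have hφ : ∀ i, φ (Pi.single i (n i)) = 0 := by
      intro i
      by_cases hi : (j : ι) = i
      · subst hi; simp [φ]
      · simp [φ, Pi.single_eq_of_ne hi]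
    have := lattice_le_ker i0 n φ (fun i => (hφ i).trans (hφ i0).symm) hmem
    simpa [φ, normalVec, dif_neg j.2, neg_add_eq_zero] using this
  have := lattice_le_ker_degree i0 n hmem
  simp only [AddMonoidHom.mem_ker, map_add, map_neg, degree_normalVec] at this
  have hdiff : (t' - t) * cofactor n i0 = 0 := by linarith
  simpa [NeZero.ne (cofactor n i0), sub_eq_zero, eq_comm] using hdiff

lemma mk_normalVec_mem_valueSemigroup_iff [∀ i, NeZero (n i)] (p : Residues i0 n) (t : ℤ) :
    (normalVec i0 n p t : (ι → ℤ) ⧸ lattice i0 n) ∈ valueSemigroup i0 n ↔ 0 ≤ t := by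
  constructor
  · rintro ⟨x, hx, hxt⟩
    rw [mk_eq_mk_normalVec] at hxt
    obtain ⟨-, rfl⟩ := eq_of_mk_normalVec_eq i0 n hxt
    exact add_nonneg (hx i0) (mul_nonneg (by positivity)
      (Finset.sum_nonneg fun j _ => Int.ediv_nonneg (hx j) (by positivity)))
  · intro ht
    refine ⟨normalVec i0 n p t, fun i => ?_, rfl⟩
    unfold normalVec
    split_ifs
    exacts [ht, by positivity]

lemma mk_normalVec_mem_gaps_iff [∀ i, NeZero (n i)] (p : Residues i0 n) (t : ℤ) :
    (normalVec i0 n p t : (ι → ℤ) ⧸ lattice i0 n) ∈ gaps i0 n ↔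
      t ∈ Ico (-(residueDegree i0 n p / cofactor n i0)) 0 := by
  have hd : (0 : ℤ) < cofactor n i0 := by exact_mod_cast Nat.pos_of_neZero _
  rw [gaps, Set.mem_sdiff, mk_normalVec_mem_valueSemigroup_iff, Set.mem_ofPred_eq, quotDegree,
    QuotientAddGroup.lift_mk, degree_normalVec, Finset.mem_Ico, neg_le, Int.le_ediv_iff_mul_le hd]
  constructor <;> rintro ⟨h1, h2⟩ <;> constructor <;> linarith

def normalForm (q : Σ _ : Residues i0 n, ℤ) : (ι → ℤ) ⧸ lattice i0 n :=
  normalVec i0 n q.1 q.2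

lemma normalForm_injective [∀ i, NeZero (n i)] : Function.Injective (normalForm i0 n) := by
  rintro ⟨p, t⟩ ⟨p', t'⟩ h
  obtain ⟨rfl, rfl⟩ := eq_of_mk_normalVec_eq i0 n h
  rfl

lemma gaps_eq_image_normalForm [∀ i, NeZero (n i)] :
    gaps i0 n = normalForm i0 n ''
      ↑(univ.sigma fun p => Ico (-(residueDegree i0 n p / cofactor n i0)) 0) := by
  ext g
  obtain ⟨x, rfl⟩ := QuotientAddGroup.mk_surjective g
  rw [mk_eq_mk_normalVec, mk_normalVec_mem_gaps_iff]
  change _ ↔ normalForm i0 n ⟨_, _⟩ ∈ _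
  rw [(normalForm_injective i0 n).mem_set_image]
  simp

lemma gaps_finite [∀ i, NeZero (n i)] : (gaps i0 n).Finite := by
  rw [gaps_eq_image_normalForm]
  exact (Finset.finite_toSet _).image _

lemma ncard_gaps [∀ i, NeZero (n i)] :
    ((gaps i0 n).ncard : ℤ) = ∑ p, residueDegree i0 n p / cofactor n i0 := by
  rw [gaps_eq_image_normalForm, Set.ncard_image_of_injective _ (normalForm_injective i0 n),
    Set.ncard_coe_finset, Finset.card_sigma, Nat.cast_sum]
  refine Finset.sum_congr rfl fun p _ => ?_
  rw [Int.card_Ico, zero_sub, neg_neg, Int.toNat_of_nonneg]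
  exact Int.ediv_nonneg (by unfold residueDegree weightedSum; positivity) (by positivity)

theorem two_mul_ncard_gaps [∀ i, NeZero (n i)] :
    2 * ((gaps i0 n).ncard : ℤ) = ((Fintype.card ι : ℤ) - 1) * ∏ i, (n i : ℤ)
      - ∑ i, (cofactor n i : ℤ) + univ.gcd fun i => (cofactor n i : ℤ) := by
  have hmul : ∀ j, ((n j : ℤ) - 1) * cofactor n j = ∏ i, (n i : ℤ) - cofactor n j := fun j => by
    rw [show ∏ i, (n i : ℤ) = n j * cofactor n j by exact_mod_cast prod_eq_mul_cofactor n j]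
    ring
  rw [ncard_gaps]
  unfold residueDegree
  rw [two_mul_sum_weightedSum_div (fun j : {j // j ≠ i0} => n j)
      (fun j => (cofactor n j : ℤ)) (fun j => cofactor_dvd_mul_cofactor n i0 j) rfl,
    Finset.gcd_univ_eq_gcd_subtype_ne _ i0, Fintype.sum_eq_add_sum_subtype_ne _ i0, ← Int.coe_gcd]
  simp only [hmul, Finset.sum_sub_distrib, Finset.sum_const, Finset.card_univ]
  simp [Nat.cast_sub (Fintype.card_pos_iff.2 ⟨i0⟩)]
  ring

end MonomialCurve

theorem delta_invariant_of_monomial_curve_general (m : ℕ)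
    (i0 : Fin m)
    (n : Fin m → ℤ) (hn : ∀ i, 2 ≤ n i)
    (N : ℤ) (hN : N = ∏ i, n i)
    (s : ℤ) (hs : s = Finset.gcd Finset.univ (fun i => N / n i))
    (L : AddSubgroup (Fin m → ℤ))
    (hL : L = AddSubgroup.closure
      {v | ∃ i : Fin m, i ≠ i0 ∧ v = Pi.single i0 (n i0) - Pi.single i (n i)})
    (w : ((Fin m → ℤ) ⧸ L) →+ ℤ)
    (hw : ∀ i : Fin m, w (QuotientAddGroup.mk (Pi.single i 1)) = N / n i / s)
    (S : Set ((Fin m → ℤ) ⧸ L))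
    (hS : S = QuotientAddGroup.mk '' {x : Fin m → ℤ | ∀ i, 0 ≤ x i})
    (gap : Set ((Fin m → ℤ) ⧸ L))
    (hgap : gap = {g | 0 ≤ w g} \ S) :
    gap.Finite ∧
    2 * (gap.ncard : ℤ) = ((m : ℤ) - 1) * N - (∑ i, N / n i) + s := by
  lift n to Fin m → ℕ using fun i => by linarith [hn i]
  have : ∀ i, NeZero (n i) := fun i => ⟨by have := hn i; simp only at this; omega⟩
  have hNi : ∀ i, N / n i = MonomialCurve.cofactor n i := fun i => by
    rw [hN, ← Nat.cast_prod, MonomialCurve.prod_eq_mul_cofactor n i, Nat.cast_mul,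
      Int.mul_ediv_cancel_left _ (by exact_mod_cast NeZero.ne (n i))]
  simp only [hNi] at hs hw ⊢
  obtain rfl : L = MonomialCurve.lattice i0 n := hL
  subst hS hgap
  have hs0 : 0 < s := hs ▸ lt_of_le_of_ne (Int.nonneg_of_normalize_eq_self normalize_gcd)
    fun h => NeZero.ne (MonomialCurve.cofactor n i0)
      (by exact_mod_cast Finset.gcd_eq_zero_iff.1 h.symm i0 (mem_univ _))
  have hdeg : s • w = MonomialCurve.quotDegree i0 n := by
    ext i
    simp [hw i, MonomialCurve.quotDegree, MonomialCurve.degree_single,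
      Int.mul_ediv_cancel' (hs ▸ Finset.gcd_dvd (mem_univ i) : s ∣ _)]
  have hgaps : {g | 0 ≤ w g} \ QuotientAddGroup.mk '' {x : Fin m → ℤ | ∀ i, 0 ≤ x i}
      = MonomialCurve.gaps i0 n := by
    ext g
    simp [MonomialCurve.gaps, MonomialCurve.valueSemigroup, ← hdeg,
      mul_nonneg_iff_of_pos_left hs0]
  rw [hgaps, hN, hs, ← Nat.cast_prod, MonomialCurve.two_mul_ncard_gaps]
  exact ⟨MonomialCurve.gaps_finite i0 n, by simp⟩

/-- Example 5.1(6) combined with Proposition 4.1 of Neumann–Wahl, "The End Curve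
Theorem for normal complex surface singularities".  For integers `m ≥ 2` and
`n 0, …, n (m-1) ≥ 2`, set `N = ∏ n i`, `Ni i = N / n i`,
`s = gcd (Ni 0, …, Ni (m-1))`.  Let `Ĝ = ℤ^m / L` where `L` is generated by the
elements `n 0 • e 0 - n i • e i` (`i ≠ 0`), let `w : Ĝ → ℤ` be the homomorphism
induced by `e i ↦ Ni i / s`, and let `S ⊆ Ĝ` be the image of `ℕ^m`.  Then the
gap set `{g : w g ≥ 0} \ S` is finite of cardinality `δ`, with
`2δ = (m-1) N - ∑ Ni i + s`. -/
theorem delta_invariant_of_monomial_curve (m : ℕ) (hm : 2 ≤ m)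
    (i0 : Fin m) (hi0 : (i0 : ℕ) = 0)
    (n : Fin m → ℤ) (hn : ∀ i, 2 ≤ n i)
    (N : ℤ) (hN : N = ∏ i, n i)
    (s : ℤ) (hs : s = Finset.gcd Finset.univ (fun i => N / n i))
    (L : AddSubgroup (Fin m → ℤ))
    (hL : L = AddSubgroup.closure
      {v | ∃ i : Fin m, i ≠ i0 ∧ v = Pi.single i0 (n i0) - Pi.single i (n i)})
    (w : ((Fin m → ℤ) ⧸ L) →+ ℤ)
    (hw : ∀ i : Fin m, w (QuotientAddGroup.mk (Pi.single i 1)) = N / n i / s)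
    (S : Set ((Fin m → ℤ) ⧸ L))
    (hS : S = QuotientAddGroup.mk '' {x : Fin m → ℤ | ∀ i, 0 ≤ x i})
    (gap : Set ((Fin m → ℤ) ⧸ L))
    (hgap : gap = {g | 0 ≤ w g} \ S) :
    gap.Finite ∧
    2 * (gap.ncard : ℤ) = ((m : ℤ) - 1) * N - (∑ i, N / n i) + s :=
  delta_invariant_of_monomial_curve_general m i0 n hn N hN s hs L hL w hw S hS gap hgap
end

section
/- Let $m \ge 1$ and let $\ell_1, \dots, \ell_m$ be positive integers with $\gcd(\ell_1, \dots, \ell_m) = 1$. Let $T = \{ (u^{\ell_1}, \dots, u^{\ell_m}) : u \in \mathbb{C}^\times \} \le (\mathbb{C}^\times)^m$, let $D$ be a finite subgroup of $(\mathbb{C}^\times)^m$, let $G$ be the subgroup of $(\mathbb{C}^\times)^m$ generated by $D$ and $T$, and let $H = D \cap T$. For $I = (i_1, \dots, i_m) \in \mathbb{Z}^m$ and $g \in (\mathbb{C}^\times)^m$ write $g^I = \prod_j g_j^{i_j}$; let $L_G = \{ I \in \mathbb{Z}^m : g^I = 1 \text{ for all } g \in G \}$ and $L_D = \{ I \in \mathbb{Z}^m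 : d^I = 1 \text{ for all } d \in D \}$, and let $w : \mathbb{Z}^m \to \mathbb{Z}$ be $w(I) = \sum_j i_j \ell_j$. Then the quotient group $L_D / L_G$ is infinite cyclic, $w$ vanishes on $L_G$ (so induces a homomorphism $L_D/L_G \to \mathbb{Z}$), and this induced homomorphism is injective with image $|H| \cdot \mathbb{Z}$; in particular $L_D/L_G$ is generated by a class of weight $|H| = |D \cap T|$. -/
/-!
On the one-parameter subgroup `T = φ(ℂˣ)`, `φ u = (u ^ ℓ j)_j`, the monomial character `χ_I` is
`u ↦ u ^ w(I)`, and `φ` is injective because `gcd ℓ = 1`. Hence `L_G = L_D ∩ ker w`. The key input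
is that a finite subgroup `D` of the torus is cut out by the monomial characters trivial on it:
its coordinates are `N`-th roots of unity, and every character of `μ_N^m` is monomial, so this is
duality for finite abelian groups. Writing `w(L_D) = kℤ`, it follows that `φ u ∈ D ↔ u ^ k = 1`,
so `H = φ(μ_k)` and `|H| = k`.
-/

theorem Finset.prod_zpow_eq_zpow_sum {ι M : Type*} [CommGroup M] (s : Finset ι) (c : ι → ℤ)
    (u : M) : ∏ j ∈ s, u ^ c j = u ^ ∑ j ∈ s, c j :=
  calc ∏ j ∈ s, u ^ c j = ∏ j ∈ s, zpowersHom M u (.ofAdd (c j)) := rfl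
    _ = u ^ ∑ j ∈ s, c j := by rw [← map_prod, ← ofAdd_sum]; rfl

theorem Int.exists_addSubgroup_eq_zmultiples_natCast (S : AddSubgroup ℤ) :
    ∃ k : ℕ, S = AddSubgroup.zmultiples (k : ℤ) := by
  obtain ⟨a, rfl⟩ := Int.subgroup_cyclic S
  exact ⟨a.natAbs, by rw [Int.zmultiples_natAbs, AddSubgroup.zmultiples_eq_closure]⟩

theorem Int.nonempty_addEquiv_of_ne_bot {S : AddSubgroup ℤ} (hS : S ≠ ⊥) :
    Nonempty (S ≃+ ℤ) := by
  obtain ⟨k, rfl⟩ := Int.exists_addSubgroup_eq_zmultiples_natCast S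
  have hk : (k : ℤ) ≠ 0 := by rintro hk; simp [hk] at hS
  have hinj : Function.Injective (zmultiplesHom ℤ (k : ℤ)) := fun x y h ↦
    mul_right_cancel₀ hk (by simpa using h)
  exact ⟨(AddEquiv.addSubgroupCongr (AddSubgroup.range_zmultiplesHom _)).symm.trans
    (AddMonoidHom.ofInjective hinj).symm⟩

theorem AddSubgroup.nonempty_quotient_addEquiv_int {A : Type*} [AddCommGroup A]
    {K L : AddSubgroup A} (w : A →+ ℤ) (hK : ∀ x ∈ L, x ∈ K ↔ w x = 0) (hL : L.map w ≠ ⊥) :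
    Nonempty (L ⧸ K.addSubgroupOf L ≃+ ℤ) := by
  have hker : (w.comp L.subtype).ker = K.addSubgroupOf L := by
    ext x
    simp [AddSubgroup.mem_addSubgroupOf, hK x x.2]
  have hrange : (w.comp L.subtype).range = L.map w := by
    rw [AddMonoidHom.range_comp, AddSubgroup.range_subtype]
  obtain ⟨e⟩ := Int.nonempty_addEquiv_of_ne_bot hL
  exact ⟨(QuotientAddGroup.quotientAddEquivOfEq hker.symm).trans
    ((QuotientAddGroup.quotientKerEquivRange _).trans ((AddEquiv.addSubgroupCongr hrange).trans e))⟩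

theorem Complex.exists_not_isOfFinOrder : ∃ u : ℂˣ, ¬IsOfFinOrder u :=
  ⟨Units.mk0 2 two_ne_zero, fun h ↦ by
    have := (Units.isOfFinOrder_val.mpr h).norm_eq_one
    norm_num at this⟩

/-- For `k = 0` both sides are `0`: `rootsOfUnity 0 ℂ = ⊤` is infinite. -/
theorem Complex.natCard_rootsOfUnity (k : ℕ) : Nat.card (rootsOfUnity k ℂ) = k := by
  rcases eq_zero_or_neZero k with rfl | _
  · obtain ⟨u, hu⟩ := Complex.exists_not_isOfFinOrder
    have : Infinite ℂˣ := not_finite_iff_infinite.mp fun _ ↦ hu (isOfFinOrder_of_finite u)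
    rw [rootsOfUnity_zero, Subgroup.card_top, Nat.card_eq_zero_of_infinite]
  · exact Complex.card_rootsOfUnity k

section Monomial

variable {ι M : Type*} [CommGroup M]

variable (M) in
def weightedPowHom (ℓ : ι → ℕ) : M →* (ι → M) := MonoidHom.pi fun j ↦ powMonoidHom (ℓ j)

@[simp]
theorem weightedPowHom_apply (ℓ : ι → ℕ) (u : M) : weightedPowHom M ℓ u = fun j ↦ u ^ ℓ j := rfl

variable [Fintype ι]

def monomialHom (I : ι → ℤ) : (ι → M) →* M where
  toFun g := ∏ j, g j ^ I j
  map_one' := by simp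
  map_mul' g h := by simp only [Pi.mul_apply, mul_zpow, Finset.prod_mul_distrib]

@[simp]
theorem monomialHom_apply (I : ι → ℤ) (g : ι → M) : monomialHom I g = ∏ j, g j ^ I j := rfl

theorem monomialHom_add (I J : ι → ℤ) (g : ι → M) :
    monomialHom (I + J) g = monomialHom I g * monomialHom J g := by
  simp [zpow_add, Finset.prod_mul_distrib]

theorem monomialHom_nsmul_single [DecidableEq ι] (N : ℕ) (j : ι) (g : ι → M) :
    monomialHom ((N : ℤ) • Pi.single j 1) g = g j ^ N := by
  simp [Pi.single_apply]

theorem monomialHom_weightedPowHom (I : ι → ℤ) (ℓ : ι → ℕ) (u : M) :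
    monomialHom I (weightedPowHom M ℓ u) = u ^ ∑ j, I j * ℓ j := by
  simp only [monomialHom_apply, weightedPowHom_apply, ← zpow_natCast, ← zpow_mul, mul_comm,
    Finset.prod_zpow_eq_zpow_sum]

theorem weightedPowHom_injective {ℓ : ι → ℕ} (hℓ : Finset.univ.gcd ℓ = 1) :
    Function.Injective (weightedPowHom M ℓ) := by
  refine (injective_iff_map_eq_one _).mpr fun u hu ↦ ?_
  have hdvd : orderOf u ∣ Finset.univ.gcd ℓ :=
    Finset.dvd_gcd fun j _ ↦ orderOf_dvd_of_pow_eq_one (congrFun hu j)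
  rwa [hℓ, Nat.dvd_one, orderOf_eq_one_iff] at hdvd

/-- The paper's `L_D`. -/
def monomialAnnihilator (D : Subgroup (ι → M)) : AddSubgroup (ι → ℤ) where
  carrier := {I | ∀ d ∈ D, monomialHom I d = 1}
  zero_mem' _ _ := by simp
  add_mem' hI hJ d hd := by rw [monomialHom_add, hI d hd, hJ d hd, one_mul]
  neg_mem' hI d hd := by simpa using hI d hd

theorem mem_monomialAnnihilator_iff_le_ker {D : Subgroup (ι → M)} {I : ι → ℤ} :
    I ∈ monomialAnnihilator D ↔ D ≤ (monomialHom I).ker :=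
  Iff.rfl

theorem mem_monomialAnnihilator_sup_range_iff {u₀ : M} (hu₀ : ¬IsOfFinOrder u₀)
    (D : Subgroup (ι → M)) (ℓ : ι → ℕ) (I : ι → ℤ) :
    I ∈ monomialAnnihilator (D ⊔ (weightedPowHom M ℓ).range) ↔
      I ∈ monomialAnnihilator D ∧ ∑ j, I j * ℓ j = 0 := by
  simp only [mem_monomialAnnihilator_iff_le_ker, sup_le_iff, MonoidHom.range_le_ker_iff,
    DFunLike.ext_iff, MonoidHom.comp_apply, monomialHom_weightedPowHom, MonoidHom.one_apply]
  refine and_congr_right fun _ ↦ ⟨fun h ↦ ?_, fun h u ↦ by rw [h, zpow_zero]⟩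
  exact injective_zpow_iff_not_isOfFinOrder.mpr hu₀ ((h u₀).trans (zpow_zero u₀).symm)

end Monomial

theorem exists_monomialHom_comp_eq {ι R : Type*} [Fintype ι] [CommRing R] [IsDomain R] {N : ℕ}
    [NeZero N] (ψ : (ι → rootsOfUnity N R) →* Rˣ) :
    ∃ I : ι → ℤ, (monomialHom I).comp ((rootsOfUnity N R).subtype.compLeft ι) = ψ := by
  classical
  -- `ψ ∘ mulSingle j` lands in the cyclic group `μ_N`, so it is a power map.
  have hψ : ∀ j, ∃ k : ℤ, ∀ x, ψ (Pi.mulSingle j x) = (x : Rˣ) ^ k := fun j ↦ by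
    let ψj := (ψ.comp (MonoidHom.mulSingle _ j)).codRestrict (rootsOfUnity N R) fun x ↦ by
      rw [mem_rootsOfUnity, ← map_pow, show x ^ N = 1 from Subtype.ext x.2, map_one]
    obtain ⟨k, hk⟩ := MonoidHom.map_cyclic ψj
    exact ⟨k, fun x ↦ congrArg Subtype.val (hk x)⟩
  choose I hI using hψ
  refine ⟨I, MonoidHom.ext fun x ↦ ?_⟩
  conv_rhs => rw [← Finset.univ_prod_mulSingle x, map_prod]
  simp [hI]

section AlgClosed

variable {ι K : Type*} [Fintype ι] [Field K] [IsAlgClosed K] [CharZero K]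
  {D : Subgroup (ι → Kˣ)} [Finite D]

theorem mem_of_forall_mem_monomialAnnihilator {g : ι → Kˣ}
    (hg : ∀ I ∈ monomialAnnihilator D, monomialHom I g = 1) : g ∈ D := by
  classical
  set N := Nat.card D
  have : NeZero N := ⟨Nat.card_pos.ne'⟩
  have hD : ∀ d ∈ D, ∀ j, d j ^ N = 1 := fun d hd j ↦
    congrFun (congrArg Subtype.val (pow_card_eq_one' (x := (⟨d, hd⟩ : D)))) j
  have hgN : ∀ j, g j ^ N = 1 := fun j ↦ by
    rw [← monomialHom_nsmul_single]
    exact hg _ fun d hd ↦ by rw [monomialHom_nsmul_single, hD d hd j]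
  let incl := (rootsOfUnity N K).subtype.compLeft ι
  change incl (fun j ↦ ⟨g j, hgN j⟩) ∈ D
  rw [← Subgroup.mem_comap]
  have : NeZero (Monoid.exponent (ι → rootsOfUnity N K) : K) :=
    ⟨Nat.cast_ne_zero.mpr Monoid.exponent_ne_zero_of_finite⟩
  refine (CommGroup.forall_monoidHom_apply_eq_one_iff K _ _).mp fun ψ hψ ↦ ?_
  obtain ⟨I, rfl⟩ := exists_monomialHom_comp_eq ψ
  exact hg I fun d hd ↦ hψ (fun j ↦ ⟨d j, hD d hd j⟩) hd

theorem comap_weightedPowHom_eq_rootsOfUnity {ℓ : ι → ℕ} {w : (ι → ℤ) →+ ℤ}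
    (hw : ∀ I, w I = ∑ j, I j * ℓ j) {k : ℕ}
    (hk : (monomialAnnihilator D).map w = AddSubgroup.zmultiples (k : ℤ)) :
    D.comap (weightedPowHom Kˣ ℓ) = rootsOfUnity k K := by
  ext u
  rw [Subgroup.mem_comap, mem_rootsOfUnity]
  constructor
  · intro hu
    obtain ⟨I, hI, hwI⟩ : (k : ℤ) ∈ (monomialAnnihilator D).map w :=
      hk ▸ AddSubgroup.mem_zmultiples _
    have h := hI _ hu
    rwa [monomialHom_weightedPowHom, ← hw, hwI, zpow_natCast] at h
  · intro hu
    refine mem_of_forall_mem_monomialAnnihilator fun I hI ↦ ?_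
    obtain ⟨c, hc⟩ : (k : ℤ) ∣ w I := Int.mem_zmultiples_iff.mp (hk ▸ ⟨I, hI, rfl⟩)
    rw [monomialHom_weightedPowHom, ← hw, hc, zpow_mul, zpow_natCast, hu, one_zpow]

end AlgClosed

theorem kernel_of_character_restriction_general (m : ℕ)
    (ℓ : Fin m → ℕ)
    (hgcd : Finset.gcd Finset.univ ℓ = 1)
    (T : Subgroup (Fin m → ℂˣ))
    (hT : (T : Set (Fin m → ℂˣ)) = {y | ∃ u : ℂˣ, y = fun j => u ^ ℓ j})
    (D : Subgroup (Fin m → ℂˣ)) (hD : Finite D)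
    (G : Subgroup (Fin m → ℂˣ)) (hG : G = D ⊔ T)
    (H : Subgroup (Fin m → ℂˣ)) (hH : H = D ⊓ T)
    (LG LD : AddSubgroup (Fin m → ℤ))
    (hLG : ∀ I : Fin m → ℤ, I ∈ LG ↔ ∀ g ∈ G, (∏ j, (g j) ^ (I j)) = 1)
    (hLD : ∀ I : Fin m → ℤ, I ∈ LD ↔ ∀ d ∈ D, (∏ j, (d j) ^ (I j)) = 1)
    (w : (Fin m → ℤ) →+ ℤ) (hw : ∀ I, w I = ∑ j, I j * (ℓ j : ℤ)) :
    Nonempty ((↥LD ⧸ LG.addSubgroupOf LD) ≃+ ℤ) ∧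
    (∀ I ∈ LG, w I = 0) ∧
    (∀ I ∈ LD, w I = 0 → I ∈ LG) ∧
    w '' (LD : Set (Fin m → ℤ)) = {z : ℤ | (Nat.card H : ℤ) ∣ z} := by
  set φ := weightedPowHom ℂˣ ℓ
  have hTφ : T = φ.range := SetLike.coe_injective (by rw [hT]; ext; simp [φ, eq_comm])
  obtain rfl : LD = monomialAnnihilator D := AddSubgroup.ext hLD
  obtain rfl : LG = monomialAnnihilator (D ⊔ φ.range) := by
    rw [← hTφ, ← hG]
    exact AddSubgroup.ext hLG
  obtain ⟨u₀, hu₀⟩ := Complex.exists_not_isOfFinOrder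
  have hLG_iff (I : Fin m → ℤ) : I ∈ monomialAnnihilator (D ⊔ φ.range) ↔
      I ∈ monomialAnnihilator D ∧ w I = 0 := by
    rw [hw]; exact mem_monomialAnnihilator_sup_range_iff hu₀ D ℓ I
  obtain ⟨k, hk⟩ := Int.exists_addSubgroup_eq_zmultiples_natCast ((monomialAnnihilator D).map w)
  have hcard : Nat.card H = k := by
    rw [hH, hTφ, inf_comm, ← Subgroup.map_comap_eq,
      Subgroup.card_map_of_injective (weightedPowHom_injective hgcd),
      comap_weightedPowHom_eq_rootsOfUnity hw hk, Complex.natCard_rootsOfUnity]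
  have hk0 : (k : ℤ) ≠ 0 := by
    have : Finite H := Finite.of_injective _ (Subgroup.inclusion_injective (hH ▸ inf_le_left))
    exact_mod_cast hcard ▸ Nat.card_pos.ne'
  refine ⟨?_, fun I hI ↦ ((hLG_iff I).mp hI).2, fun I hI hwI ↦ (hLG_iff I).mpr ⟨hI, hwI⟩, ?_⟩
  · refine AddSubgroup.nonempty_quotient_addEquiv_int w (fun I hI ↦ ?_) ?_
    · simp [hLG_iff, hI]
    · rwa [hk, Ne, AddSubgroup.zmultiples_eq_bot]
  · ext z
    rw [hcard, ← AddSubgroup.coe_map, hk]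
    exact Int.mem_zmultiples_iff

/-- Proposition 4.2 of Neumann–Wahl, "The End Curve Theorem for normal complex surface
singularities".  Let `ℓ 0, …, ℓ (m-1)` be positive integers with gcd `1`, let
`T = {(u^(ℓ 0), …, u^(ℓ (m-1))) : u ∈ ℂ^×} ≤ (ℂ^×)^m`, let `D` be a finite
subgroup of `(ℂ^×)^m`, `G = D ⊔ T`, and `H = D ⊓ T`.  With
`L_G = {I ∈ ℤ^m : g^I = 1 ∀ g ∈ G}`, `L_D = {I ∈ ℤ^m : d^I = 1 ∀ d ∈ D}`, and
weight `w(I) = ∑ I j * ℓ j`:  the quotient `L_D / L_G` is infinite cyclic, `w`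
vanishes on `L_G`, and the homomorphism `L_D/L_G → ℤ` induced by `w` is injective
with image `|H|·ℤ`; in particular `L_D/L_G` is generated by a class of weight
`|H| = |D ∩ T|`. -/
theorem kernel_of_character_restriction (m : ℕ) (hm : 1 ≤ m)
    (ℓ : Fin m → ℕ) (hℓ : ∀ j, 0 < ℓ j)
    (hgcd : Finset.gcd Finset.univ ℓ = 1)
    (T : Subgroup (Fin m → ℂˣ))
    (hT : (T : Set (Fin m → ℂˣ)) = {y | ∃ u : ℂˣ, y = fun j => u ^ ℓ j})
    (D : Subgroup (Fin m → ℂˣ)) (hD : Finite D)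
    (G : Subgroup (Fin m → ℂˣ)) (hG : G = D ⊔ T)
    (H : Subgroup (Fin m → ℂˣ)) (hH : H = D ⊓ T)
    (LG LD : AddSubgroup (Fin m → ℤ))
    (hLG : ∀ I : Fin m → ℤ, I ∈ LG ↔ ∀ g ∈ G, (∏ j, (g j) ^ (I j)) = 1)
    (hLD : ∀ I : Fin m → ℤ, I ∈ LD ↔ ∀ d ∈ D, (∏ j, (d j) ^ (I j)) = 1)
    (w : (Fin m → ℤ) →+ ℤ) (hw : ∀ I, w I = ∑ j, I j * (ℓ j : ℤ)) :
    Nonempty ((↥LD ⧸ LG.addSubgroupOf LD) ≃+ ℤ) ∧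
    (∀ I ∈ LG, w I = 0) ∧
    (∀ I ∈ LD, w I = 0 → I ∈ LG) ∧
    w '' (LD : Set (Fin m → ℤ)) = {z : ℤ | (Nat.card H : ℤ) ∣ z} :=
  kernel_of_character_restriction_general m ℓ hgcd T hT D hD G hG H hH LG LD hLG hLD w hw
end

section
/- Let $m \ge 1$ and let $G$ be any subgroup of $(\mathbb{C}^\times)^m$. For $I = (i_1, \dots, i_m) \in \mathbb{N}^m$ write $Y^I = Y_1^{i_1} \cdots Y_m^{i_m}$ for the corresponding monomial in the polynomial ring $\mathbb{C}[Y_1, \dots, Y_m]$, and for $g \in (\mathbb{C}^\times)^m$ write $g^I = \prod_j g_j^{i_j}$. Then the ideal $\{ f \in \mathbb{C}[Y_1, \dots, Y_m] : f(g) = 0 \text{ for all } g \in G \}$ of polynomials vanishing at every point of $G$ is equal to the ideal generated by the binomials $Y^I - Y^{I'}$ over all pairs $I, I' \in \mathbb{N}^m$ such that $g^I = g^{I'}$ for all $g \in G$. -/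
open MvPolynomial
open scoped Classical

noncomputable section

/-- The character on `G` defined by a monomial exponent `I`. -/
def torusChar (m : ℕ) (G : Subgroup (Fin m → ℂˣ)) (I : Fin m →₀ ℕ) : G →* ℂ where
  toFun g := ∏ j, ((g : Fin m → ℂˣ) j : ℂ) ^ I j
  map_one' := by simp
  map_mul' a b := by
    simp [mul_pow, Finset.prod_mul_distrib]

/-- The generating set of binomials. -/
def genSet (m : ℕ) (G : Subgroup (Fin m → ℂˣ)) : Set (MvPolynomial (Fin m) ℂ) :=
  {p : MvPolynomial (Fin m) ℂ |
    ∃ I I' : Fin m →₀ ℕ,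
      (∀ g ∈ G, (∏ j, (g j : ℂ) ^ I j) = ∏ j, (g j : ℂ) ^ I' j) ∧
      p = MvPolynomial.monomial I 1 - MvPolynomial.monomial I' 1}

lemma eval_monomial_one (m : ℕ) (x : Fin m → ℂ) (I : Fin m →₀ ℕ) :
    MvPolynomial.eval x (MvPolynomial.monomial I (1 : ℂ)) = ∏ j, x j ^ I j := by
  simp [MvPolynomial.eval_monomial, Finsupp.prod_pow]

lemma classSum (m : ℕ) (G : Subgroup (Fin m → ℂˣ)) (f : MvPolynomial (Fin m) ℂ)
    (hf : ∀ g ∈ G, MvPolynomial.eval (fun j => (g j : ℂ)) f = 0)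
    (I₀ : Fin m →₀ ℕ) (hI₀ : I₀ ∈ f.support) :
    ∑ I ∈ f.support.filter (fun I => torusChar m G I = torusChar m G I₀),
      MvPolynomial.coeff I f = 0 := by
  classical
  set χ := torusChar m G with hχ
  have hli := linearIndependent_monoidHom G ℂ
  rw [linearIndependent_iff'] at hli
  have key : ∑ c ∈ f.support.image χ,
      (∑ I ∈ f.support.filter (fun I => χ I = c), MvPolynomial.coeff I f) • (⇑c : G → ℂ)
        = 0 := by
    funext g
    have hg := g.2
    simp only [Finset.sum_apply, Pi.smul_apply, smul_eq_mul, Pi.zero_apply]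
    have h1 : ∀ c ∈ f.support.image χ,
        (∑ I ∈ f.support.filter (fun I => χ I = c), MvPolynomial.coeff I f) * c g
          = ∑ I ∈ f.support.filter (fun I => χ I = c),
              MvPolynomial.coeff I f * χ I g := by
      intro c _
      rw [Finset.sum_mul]
      refine Finset.sum_congr rfl fun I hI => ?_
      rw [(Finset.mem_filter.mp hI).2]
    rw [Finset.sum_congr rfl h1,
      Finset.sum_fiberwise_of_maps_to (fun I hI => Finset.mem_image_of_mem χ hI)]
    have : MvPolynomial.eval (fun j => ((g : Fin m → ℂˣ) j : ℂ)) f = 0 := hf _ g.2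
    rw [MvPolynomial.eval_eq'] at this
    simpa [hχ, torusChar] using this
  have := hli (f.support.image χ) _ key (χ I₀) (Finset.mem_image_of_mem χ hI₀)
  exact this

lemma mainAux (m : ℕ) (G : Subgroup (Fin m → ℂˣ)) :
    ∀ n (f : MvPolynomial (Fin m) ℂ), f.support.card ≤ n →
      (∀ g ∈ G, MvPolynomial.eval (fun j => (g j : ℂ)) f = 0) →
      f ∈ Ideal.span (genSet m G) := by
  classical
  intro n
  induction n with
  | zero =>
    intro f hcard _
    have : f.support = ∅ := Finset.card_eq_zero.mp (Nat.le_zero.mp hcard)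
    have : f = 0 := by
      rwa [← MvPolynomial.support_eq_empty]
    simp [this]
  | succ n ih =>
    intro f hcard hf
    by_cases hf0 : f = 0
    · simp [hf0]
    · obtain ⟨I₀, hI₀⟩ := MvPolynomial.support_nonempty.mpr hf0
      set χ := torusChar m G with hχ
      set T := f.support.filter (fun I => χ I = χ I₀) with hT
      have hI₀T : I₀ ∈ T := Finset.mem_filter.mpr ⟨hI₀, rfl⟩
      have hTsub : T ⊆ f.support := Finset.filter_subset _ _
      have hsum0 : ∑ I ∈ T, MvPolynomial.coeff I f = 0 :=
        classSum m G f hf I₀ hI₀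
      set b : MvPolynomial (Fin m) ℂ :=
        ∑ I ∈ T, MvPolynomial.C (MvPolynomial.coeff I f) *
          (MvPolynomial.monomial I 1 - MvPolynomial.monomial I₀ 1) with hb
      -- b is in the span
      have hbmem : b ∈ Ideal.span (genSet m G) := by
        refine Ideal.sum_mem _ fun I hI => Ideal.mul_mem_left _ _ (Ideal.subset_span ?_)
        have hIχ : χ I = χ I₀ := (Finset.mem_filter.mp hI).2
        refine ⟨I, I₀, fun g hg => ?_, rfl⟩
        exact DFunLike.congr_fun hIχ ⟨g, hg⟩
      -- simplified form of b
      have hb2 : b = ∑ I ∈ T, MvPolynomial.monomial I (MvPolynomial.coeff I f) := by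
        rw [hb]
        have : ∀ I ∈ T, MvPolynomial.C (MvPolynomial.coeff I f) *
            (MvPolynomial.monomial I 1 - MvPolynomial.monomial I₀ 1)
            = MvPolynomial.monomial I (MvPolynomial.coeff I f)
              - MvPolynomial.monomial I₀ (MvPolynomial.coeff I f) := by
          intro I _
          rw [mul_sub, MvPolynomial.C_mul_monomial, MvPolynomial.C_mul_monomial, mul_one]
        rw [Finset.sum_congr rfl this, Finset.sum_sub_distrib]
        have : ∑ I ∈ T, MvPolynomial.monomial I₀ (MvPolynomial.coeff I f)
            = MvPolynomial.monomial I₀ (∑ I ∈ T, MvPolynomial.coeff I f) := by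
          rw [map_sum]
        rw [this, hsum0, map_zero, sub_zero]
      have hcoeffb : ∀ J, MvPolynomial.coeff J b =
          if J ∈ T then MvPolynomial.coeff J f else 0 := by
        intro J
        rw [hb2, MvPolynomial.coeff_sum]
        simp only [MvPolynomial.coeff_monomial]
        exact Finset.sum_ite_eq' T J (fun I => MvPolynomial.coeff I f)
      -- support of f - b
      have hsupp : (f - b).support ⊆ f.support \ T := by
        intro J hJ
        have hJ' : MvPolynomial.coeff J f - MvPolynomial.coeff J b ≠ 0 := by
          simpa [MvPolynomial.coeff_sub] using MvPolynomial.mem_support_iff.mp hJ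
        by_cases hJT : J ∈ T
        · exfalso; apply hJ'; rw [hcoeffb, if_pos hJT, sub_self]
        · refine Finset.mem_sdiff.mpr ⟨?_, hJT⟩
          rw [hcoeffb, if_neg hJT, sub_zero] at hJ'
          exact MvPolynomial.mem_support_iff.mpr hJ'
      have hcard' : (f - b).support.card ≤ n := by
        have h1 : (f - b).support.card ≤ (f.support \ T).card :=
          Finset.card_le_card hsupp
        have h2 : (f.support \ T).card = f.support.card - T.card :=
          Finset.card_sdiff_of_subset hTsub
        have h3 : 1 ≤ T.card := Finset.card_pos.mpr ⟨I₀, hI₀T⟩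
        omega
      -- f - b vanishes on G
      have hvan : ∀ g ∈ G, MvPolynomial.eval (fun j => (g j : ℂ)) (f - b) = 0 := by
        intro g hg
        have hbz : MvPolynomial.eval (fun j => (g j : ℂ)) b = 0 := by
          rw [hb, map_sum]
          refine Finset.sum_eq_zero fun I hI => ?_
          have hIχ : χ I = χ I₀ := (Finset.mem_filter.mp hI).2
          have : (∏ j, (g j : ℂ) ^ I j) = ∏ j, (g j : ℂ) ^ I₀ j :=
            DFunLike.congr_fun hIχ ⟨g, hg⟩
          simp [eval_monomial_one, this]
        rw [map_sub, hf g hg, hbz, sub_zero]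
      have := ih (f - b) hcard' hvan
      have : f = (f - b) + b := by ring
      rw [this]
      exact Ideal.add_mem _ (ih (f - b) hcard' hvan) hbmem

/-- First part of Proposition 4.1 of Neumann–Wahl, "The End Curve Theorem for normal
complex surface singularities".  For a subgroup `G` of the torus `(ℂ^×)^m`, the
ideal of polynomials in `ℂ[Y 0, …, Y (m-1)]` vanishing at every point of `G` is
generated by the binomials `Y^I - Y^I'` over all pairs of monomial exponents
`I, I'` that define equal characters on `G` (i.e. `g^I = g^I'` for all `g ∈ G`). -/
theorem vanishing_ideal_of_torus_subgroup (m : ℕ) (hm : 1 ≤ m)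
    (G : Subgroup (Fin m → ℂˣ)) :
    {f : MvPolynomial (Fin m) ℂ |
        ∀ g ∈ G, MvPolynomial.eval (fun j => (g j : ℂ)) f = 0} =
      ↑(Ideal.span {p : MvPolynomial (Fin m) ℂ |
        ∃ I I' : Fin m →₀ ℕ,
          (∀ g ∈ G, (∏ j, (g j : ℂ) ^ I j) = ∏ j, (g j : ℂ) ^ I' j) ∧
          p = MvPolynomial.monomial I 1 - MvPolynomial.monomial I' 1}) := by
  classical
  -- the vanishing ideal
  let J : Ideal (MvPolynomial (Fin m) ℂ) :=
    { carrier := {f | ∀ g ∈ G, MvPolynomial.eval (fun j => (g j : ℂ)) f = 0}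
      zero_mem' := by intro g hg; simp
      add_mem' := by intro a b ha hb g hg; simp [ha g hg, hb g hg]
      smul_mem' := by
        intro c a ha g hg
        simp [smul_eq_mul, ha g hg] }
  ext f
  constructor
  · intro hf
    exact mainAux m G f.support.card f le_rfl hf
  · intro hf
    have hsub : genSet m G ⊆ (J : Set (MvPolynomial (Fin m) ℂ)) := by
      rintro p ⟨I, I', hII', rfl⟩ g hg
      simp only [map_sub, eval_monomial_one]
      rw [hII' g hg, sub_self]
    exact Ideal.span_le.mpr hsub hf

end
end

section
/- Let $k \ge 2$. For each $i \in \{1, \dots, k\}$ let $G_i$ be an abelian group, $w_i : G_i \to \mathbb{Z}$ a surjective group homomorphism whose kernel is finite of cardinality $r_i$, and $Q_i \in G_i$ an element with $q_i := w_i(Q_i) > 0$. Set $\mathcal{Q}_i = \prod_{j \ne i} q_j$ and $h = \gcd(\mathcal{Q}_1, \dots, \mathcal{Q}_k)$. In the direct sum $\bigoplus_{i=1}^k G_i$, let $A_j = \iota_1(Q_1) - \iota_j(Q_j)$ for $j = 2, \dots, k$, where $\iota_i$ is the canonical inclusion of the $i$-th summand. Then: (1) the elements $A_2, \dots, A_k$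 are a free basis of the subgroup they generate, which is free abelian of rank $k-1$; and (2) the torsion subgroup of the quotient group $G = (\bigoplus_{i=1}^k G_i) / \langle A_2, \dots, A_k \rangle$ is finite of cardinality $r_1 \cdots r_k \cdot h$. -/
/-!
Let `W : ∏ Gᵢ → ℤᵏ` be the product of the weights and `φ x = ∑ 𝒬ᵢ xᵢ`. `W` sends the `Aⱼ` to
the independent vectors `q₁e₁ - qⱼeⱼ`, so the `Aⱼ` are independent and their span `K` meets the
finite group `ker W` trivially. The degree `φ ∘ W` kills `K` and takes values in the torsion-free
group `ℤ`, so the torsion of `(∏ Gᵢ) ⧸ K` is `ker (φ ∘ W) ⧸ K`, of order `|ker W| · [ker φ : W K]`.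
Finally `[ker φ : W K] = h`: adjoining `e₁` to both lattices keeps their relative index, and
`W K + ℤe₁ = ℤe₁ ⊕ ⨁_{j ≠ 1} qⱼℤeⱼ` has index `𝒬₁` in `ℤᵏ`, while `ker φ + ℤe₁ = φ⁻¹(𝒬₁ℤ)` has
index `𝒬₁ / h` because `φ(ℤᵏ) = hℤ` by Bézout.
-/

open Function Set AddSubgroup

section

variable {X Y : Type*} [AddCommGroup X] [AddCommGroup Y]

namespace AddCommGroup

theorem torsion_eq_ker_of_finite [IsAddTorsionFree Y] (f : X →+ Y) [Finite f.ker] :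
    AddCommGroup.torsion X = f.ker := by
  ext x
  refine ⟨fun hx => (f.isOfFinAddOrder hx).eq_zero', fun hx => ?_⟩
  exact f.ker.subtype.isOfFinAddOrder (isOfFinAddOrder_of_finite (⟨x, hx⟩ : f.ker))

theorem natCard_torsion_quotient [IsAddTorsionFree Y] {u : X →+ Y} {K : AddSubgroup X}
    (hK : K ≤ u.ker) (hindex : K.relIndex u.ker ≠ 0) :
    Nat.card (AddCommGroup.torsion (X ⧸ K)) = K.relIndex u.ker := by
  have hcard : Nat.card (QuotientAddGroup.lift K u hK).ker = K.relIndex u.ker := by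
    rw [QuotientAddGroup.ker_lift, ← relIndex_ker, QuotientAddGroup.ker_mk']
  have : Finite (QuotientAddGroup.lift K u hK).ker := Nat.finite_of_card_ne_zero (hcard ▸ hindex)
  rw [torsion_eq_ker_of_finite (QuotientAddGroup.lift K u hK), hcard]

end AddCommGroup

namespace AddSubgroup

theorem relIndex_sup_of_inf_sup_eq {L S E : AddSubgroup X} (hLS : L ≤ S)
    (h : S ⊓ (L ⊔ E) = L) : (L ⊔ E).relIndex (S ⊔ E) = L.relIndex S := by
  have hSE : S ⊔ E = S ⊔ (L ⊔ E) := by rw [← sup_assoc, sup_of_le_left hLS]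
  rw [hSE, relIndex_sup_right, ← inf_relIndex_right, inf_comm, h]

theorem relIndex_comap_of_disjoint_ker {f : X →+ Y} (hf : Surjective f) {K : AddSubgroup X}
    {S : AddSubgroup Y} (hKS : K.map f ≤ S) (hK : Disjoint K f.ker) :
    K.relIndex (S.comap f) = Nat.card f.ker * (K.map f).relIndex S := by
  rw [← relIndex_mul_relIndex K (K ⊔ f.ker) _ le_sup_left
      (by rw [← comap_map_eq]; exact comap_mono hKS),
    relIndex_sup_left, ← inf_relIndex_right, hK.eq_bot, relIndex_bot_left, ← comap_map_eq,
    relIndex_comap, map_comap_eq_self_of_surjective hf]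

theorem ker_inf_sup_zmultiples_eq [IsAddTorsionFree Y] {φ : X →+ Y} {L : AddSubgroup X}
    (hL : L ≤ φ.ker) {e : X} (he : φ e ≠ 0) : φ.ker ⊓ (L ⊔ zmultiples e) = L := by
  refine le_antisymm ?_ (le_inf hL le_sup_left)
  rintro x ⟨hx, hxLE⟩
  obtain ⟨l, hl, _, ⟨t, rfl⟩, rfl⟩ := mem_sup.mp hxLE
  have ht : t = 0 := by
    simpa [AddMonoidHom.mem_ker.mp (hL hl), he] using AddMonoidHom.mem_ker.mp hx
  simpa [ht] using hl

theorem disjoint_closure_range_ker {ι : Type*} {f : X →+ Y} {v : ι → X}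
    (hv : LinearIndependent ℤ fun i => f (v i)) : Disjoint (closure (range v)) f.ker := by
  rw [← Submodule.span_int_eq_addSubgroupClosure, AddSubgroup.disjoint_def]
  exact fun {x} => Submodule.disjoint_def.mp
    (Submodule.range_ker_disjoint (f := f.toIntLinearMap) hv) x

theorem natCard_pi_univ {ι : Type*} [Fintype ι] {G : ι → Type*} [∀ i, AddGroup (G i)]
    (K : ∀ i, AddSubgroup (G i)) :
    Nat.card (AddSubgroup.pi univ K) = ∏ i, Nat.card (K i) := by
  rw [← Nat.card_pi]
  exact Nat.card_congr (Equiv.Set.univPi fun i => (K i : Set (G i)))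

end AddSubgroup

end

theorem AddMonoidHom.ker_piMap {ι : Type*} {G H : ι → Type*} [∀ i, AddGroup (G i)]
    [∀ i, AddGroup (H i)] (w : ∀ i, G i →+ H i) :
    (AddMonoidHom.piMap w).ker = AddSubgroup.pi univ fun i => (w i).ker := by
  ext x
  simp [funext_iff, AddSubgroup.mem_pi]

variable {ι : Type*}

section WeightedSum

variable [Fintype ι]

def weightedSum (c : ι → ℤ) : (ι → ℤ) →+ ℤ :=
  (Fintype.linearCombination ℤ c).toAddMonoidHom

theorem weightedSum_apply (c x : ι → ℤ) : weightedSum c x = ∑ i, x i * c i :=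
  rfl

theorem range_weightedSum (c : ι → ℤ) :
    (weightedSum c).range = zmultiples (Finset.univ.gcd c) := by
  ext y
  rw [AddMonoidHom.mem_range, Int.mem_zmultiples_iff]
  constructor
  · rintro ⟨x, rfl⟩
    exact Finset.dvd_sum fun i _ => dvd_mul_of_dvd_right (Finset.gcd_dvd (Finset.mem_univ i)) _
  · rintro ⟨t, rfl⟩
    obtain ⟨g, hg⟩ := Finset.gcd_eq_sum_mul Finset.univ c
    refine ⟨t • g, ?_⟩
    simp only [weightedSum_apply, hg, Finset.sum_mul, Pi.smul_apply, smul_eq_mul]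
    exact Finset.sum_congr rfl fun i _ => by ring

variable [DecidableEq ι]

theorem weightedSum_single (c : ι → ℤ) (i : ι) (t : ℤ) :
    weightedSum c (Pi.single i t) = t * c i :=
  Fintype.linearCombination_apply_single ℤ c i t

theorem index_ker_weightedSum_sup_zmultiples_single_mul (c : ι → ℤ) (i₀ : ι) :
    ((weightedSum c).ker ⊔ zmultiples (Pi.single i₀ 1)).index * (Finset.univ.gcd c).natAbs =
      (c i₀).natAbs := by
  have hle : zmultiples (c i₀) ≤ zmultiples (Finset.univ.gcd c) :=
    zmultiples_le.mpr <| Int.mem_zmultiples_iff.mpr <| Finset.gcd_dvd (Finset.mem_univ i₀)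
  rw [sup_comm, ← comap_map_eq, AddMonoidHom.map_zmultiples, weightedSum_single, one_mul,
    index_comap, range_weightedSum, ← Int.index_zmultiples, ← Int.index_zmultiples,
    relIndex_mul_index hle]

end WeightedSum

section Amalgamation

variable [DecidableEq ι] {G : ι → Type*} [∀ i, AddCommGroup (G i)]

def amalgamationRelation (Q : ∀ i, G i) (i₀ j : ι) : ∀ i, G i :=
  Pi.single i₀ (Q i₀) - Pi.single j (Q j)

def amalgamationSubgroup (Q : ∀ i, G i) (i₀ : ι) : AddSubgroup (∀ i, G i) :=
  closure (range fun j : {j // j ≠ i₀} => amalgamationRelation Q i₀ j)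

theorem piMap_amalgamationRelation {H : ι → Type*} [∀ i, AddCommGroup (H i)]
    (w : ∀ i, G i →+ H i) (Q : ∀ i, G i) (i₀ j : ι) :
    AddMonoidHom.piMap w (amalgamationRelation Q i₀ j) =
      amalgamationRelation (fun i => w i (Q i)) i₀ j := by
  ext i
  simp [amalgamationRelation, Pi.apply_single (fun i => ⇑(w i)) (fun i => map_zero (w i))]

theorem map_piMap_amalgamationSubgroup {H : ι → Type*} [∀ i, AddCommGroup (H i)]
    (w : ∀ i, G i →+ H i) (Q : ∀ i, G i) (i₀ : ι) :
    (amalgamationSubgroup Q i₀).map (AddMonoidHom.piMap w) =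
      amalgamationSubgroup (fun i => w i (Q i)) i₀ := by
  rw [amalgamationSubgroup, AddMonoidHom.map_closure, ← range_comp]
  simp only [comp_def, piMap_amalgamationRelation]
  rfl

theorem linearIndependent_amalgamationRelation {q : ι → ℤ} (hq : ∀ i, q i ≠ 0) (i₀ : ι) :
    LinearIndependent ℤ fun j : {j // j ≠ i₀} => amalgamationRelation q i₀ j := by
  rw [linearIndependent_iff']
  intro s g hg j hj
  have hgj : g j * q j = 0 := by
    simpa [amalgamationRelation, Finset.sum_apply, Pi.single_apply, j.2, Subtype.val_inj, hj]
      using congrFun hg j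
  exact (mul_eq_zero.mp hgj).resolve_right (hq j)

theorem linearIndependent_piMap_amalgamationRelation {w : ∀ i, G i →+ ℤ} {Q : ∀ i, G i}
    (hq : ∀ i, w i (Q i) ≠ 0) (i₀ : ι) :
    LinearIndependent ℤ fun j : {j // j ≠ i₀} =>
      AddMonoidHom.piMap w (amalgamationRelation Q i₀ j) := by
  simpa only [piMap_amalgamationRelation] using linearIndependent_amalgamationRelation hq i₀

variable [Fintype ι]

def complementaryProduct (q : ι → ℤ) (i : ι) : ℤ :=
  ∏ j ∈ Finset.univ.erase i, q j

theorem complementaryProduct_ne_zero {q : ι → ℤ} (hq : ∀ i, q i ≠ 0) (i : ι) :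
    complementaryProduct q i ≠ 0 :=
  Finset.prod_ne_zero_iff.mpr fun j _ => hq j

theorem gcd_complementaryProduct_ne_zero [Nonempty ι] {q : ι → ℤ} (hq : ∀ i, q i ≠ 0) :
    Finset.univ.gcd (complementaryProduct q) ≠ 0 := by
  obtain ⟨i⟩ := ‹Nonempty ι›
  rw [Ne, Finset.gcd_eq_zero_iff]
  exact fun h => complementaryProduct_ne_zero hq i (h i (Finset.mem_univ i))

theorem amalgamationSubgroup_sup_zmultiples_single (q : ι → ℤ) (i₀ : ι) :
    amalgamationSubgroup q i₀ ⊔ zmultiples (Pi.single i₀ 1) =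
      AddSubgroup.pi univ fun i => zmultiples (update q i₀ 1 i) := by
  apply le_antisymm
  · refine sup_le (closure_le _ |>.mpr <| range_subset_iff.mpr fun j => ?_) ?_
    · refine (mem_pi _).mpr fun i _ => Int.mem_zmultiples_iff.mpr ?_
      rcases eq_or_ne i i₀ with rfl | hi
      · simp
      · rcases eq_or_ne i j with rfl | hij
        · simp [amalgamationRelation, hi]
        · simp [amalgamationRelation, hi, hij]
    · refine zmultiples_le.mpr <| (mem_pi _).mpr fun i _ => Int.mem_zmultiples_iff.mpr ?_
      rcases eq_or_ne i i₀ with rfl | hi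
      · simp
      · simp [hi]
  · intro x hx
    rw [← Finset.univ_sum_single x]
    refine sum_mem fun i _ => ?_
    rcases eq_or_ne i i₀ with rfl | hi
    · have hsingle : Pi.single i (x i) = x i • (Pi.single i 1 : ι → ℤ) := by
        ext i'; simp [Pi.single_apply]
      rw [hsingle]
      exact mem_sup_right (zsmul_mem (mem_zmultiples _) _)
    · obtain ⟨t, ht⟩ := Int.mem_zmultiples_iff.mp ((mem_pi _).mp hx i (mem_univ i))
      have hsingle : Pi.single i (x i) =
          t • (q i₀ • Pi.single i₀ 1 - amalgamationRelation q i₀ i) := by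
        ext i'; simp [amalgamationRelation, Pi.single_apply, ht, hi, mul_comm]
      rw [hsingle]
      exact zsmul_mem (sub_mem (mem_sup_right (zsmul_mem (mem_zmultiples _) _))
        (mem_sup_left (subset_closure (mem_range_self (⟨i, hi⟩ : {j // j ≠ i₀}))))) t

theorem index_amalgamationSubgroup_sup_zmultiples_single (q : ι → ℤ) (i₀ : ι) :
    (amalgamationSubgroup q i₀ ⊔ zmultiples (Pi.single i₀ 1)).index =
      (complementaryProduct q i₀).natAbs := by
  rw [amalgamationSubgroup_sup_zmultiples_single, index_pi]
  simp only [Int.index_zmultiples]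
  rw [complementaryProduct, ← Finset.sdiff_singleton_eq_erase, ← one_mul (∏ j ∈ _ \ _, q j),
    ← Finset.prod_update_of_mem (Finset.mem_univ i₀)]
  exact (map_prod Int.natAbsHom _ _).symm

theorem amalgamationSubgroup_le_ker_weightedSum (q : ι → ℤ) (i₀ : ι) :
    amalgamationSubgroup q i₀ ≤ (weightedSum (complementaryProduct q)).ker := by
  have hprod (i : ι) : q i * complementaryProduct q i = ∏ j, q j :=
    Finset.mul_prod_erase _ _ (Finset.mem_univ i)
  refine closure_le _ |>.mpr <| range_subset_iff.mpr fun j => ?_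
  simp [amalgamationRelation, weightedSum_single, hprod]

theorem relIndex_amalgamationSubgroup_ker_weightedSum {q : ι → ℤ} (hq : ∀ i, q i ≠ 0)
    (i₀ : ι) :
    (amalgamationSubgroup q i₀).relIndex (weightedSum (complementaryProduct q)).ker =
      (Finset.univ.gcd (complementaryProduct q)).natAbs := by
  set L := amalgamationSubgroup q i₀
  set S := (weightedSum (complementaryProduct q)).ker
  set E := zmultiples (Pi.single i₀ 1 : ι → ℤ)
  have hLS : L ≤ S := amalgamationSubgroup_le_ker_weightedSum q i₀
  have hinf : S ⊓ (L ⊔ E) = L :=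
    ker_inf_sup_zmultiples_eq hLS
      (by rw [weightedSum_single, one_mul]; exact complementaryProduct_ne_zero hq i₀)
  have hidx := index_ker_weightedSum_sup_zmultiples_single_mul (complementaryProduct q) i₀
  have hmul := relIndex_mul_index (sup_le_sup_right hLS E)
  rw [relIndex_sup_of_inf_sup_eq hLS hinf, index_amalgamationSubgroup_sup_zmultiples_single,
    ← hidx, mul_comm] at hmul
  have hcp := Int.natAbs_ne_zero.mpr (complementaryProduct_ne_zero hq i₀)
  exact Nat.eq_of_mul_eq_mul_left (Nat.pos_of_ne_zero (left_ne_zero_of_mul (hidx ▸ hcp))) hmul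

def amalgamationDegree (w : ∀ i, G i →+ ℤ) (Q : ∀ i, G i) : (∀ i, G i) →+ ℤ :=
  (weightedSum (complementaryProduct fun i => w i (Q i))).comp (AddMonoidHom.piMap w)

variable {w : ∀ i, G i →+ ℤ} {Q : ∀ i, G i}

theorem amalgamationSubgroup_le_ker_amalgamationDegree (i₀ : ι) :
    amalgamationSubgroup Q i₀ ≤ (amalgamationDegree w Q).ker := by
  rw [amalgamationDegree, ← AddMonoidHom.comap_ker, ← map_le_iff_le_comap,
    map_piMap_amalgamationSubgroup]
  exact amalgamationSubgroup_le_ker_weightedSum _ i₀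

theorem relIndex_amalgamationSubgroup_ker_amalgamationDegree (hw : ∀ i, Surjective (w i))
    (hq : ∀ i, w i (Q i) ≠ 0) (i₀ : ι) :
    (amalgamationSubgroup Q i₀).relIndex (amalgamationDegree w Q).ker =
      (∏ i, Nat.card (w i).ker) *
        (Finset.univ.gcd (complementaryProduct fun i => w i (Q i))).natAbs := by
  have hmap := map_piMap_amalgamationSubgroup w Q i₀
  rw [amalgamationDegree, ← AddMonoidHom.comap_ker,
    relIndex_comap_of_disjoint_ker (K := amalgamationSubgroup Q i₀) (Surjective.piMap hw)
      (hmap ▸ amalgamationSubgroup_le_ker_weightedSum _ i₀)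
      (disjoint_closure_range_ker (linearIndependent_piMap_amalgamationRelation hq i₀)),
    hmap, relIndex_amalgamationSubgroup_ker_weightedSum hq, AddMonoidHom.ker_piMap,
    natCard_pi_univ]

end Amalgamation

theorem torsion_of_amalgamated_character_group_general (k : ℕ)
    (i0 : Fin k)
    (G : Fin k → Type) [∀ i, AddCommGroup (G i)]
    (w : (i : Fin k) → G i →+ ℤ) (hw : ∀ i, Function.Surjective (w i))
    (hfin : ∀ i, Finite ((w i).ker))
    (r : Fin k → ℕ) (hr : ∀ i, r i = Nat.card ((w i).ker))
    (Q : (i : Fin k) → G i)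
    (q : Fin k → ℤ) (hq : ∀ i, q i = w i (Q i)) (hqpos : ∀ i, 0 < q i)
    (Qp : Fin k → ℤ) (hQp : ∀ i, Qp i = ∏ j ∈ Finset.univ.erase i, q j)
    (h : ℤ) (hh : h = Finset.gcd Finset.univ Qp)
    (A : {j : Fin k // j ≠ i0} → ((i : Fin k) → G i))
    (hA : ∀ j, A j = Pi.single i0 (Q i0) - Pi.single j.1 (Q j.1))
    (K : AddSubgroup ((i : Fin k) → G i))
    (hK : K = AddSubgroup.closure (Set.range A)) :
    LinearIndependent ℤ A ∧
    Finite (AddCommGroup.torsion (((i : Fin k) → G i) ⧸ K)) ∧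
    (Nat.card (AddCommGroup.torsion (((i : Fin k) → G i) ⧸ K)) : ℤ) =
      (∏ i, (r i : ℤ)) * h := by
  obtain rfl : r = fun i => Nat.card (w i).ker := funext hr
  obtain rfl : q = fun i => w i (Q i) := funext hq
  obtain rfl : Qp = complementaryProduct fun i => w i (Q i) := funext hQp
  obtain rfl : A = fun j : {j // j ≠ i0} => amalgamationRelation Q i0 j := funext hA
  obtain rfl : K = amalgamationSubgroup Q i0 := hK
  subst hh
  have hq0 (i : Fin k) : w i (Q i) ≠ 0 := (hqpos i).ne'
  have : Nonempty (Fin k) := ⟨i0⟩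
  have hindex := relIndex_amalgamationSubgroup_ker_amalgamationDegree hw hq0 i0
  have hindex_ne : (∏ i, Nat.card (w i).ker) *
      (Finset.univ.gcd (complementaryProduct fun i => w i (Q i))).natAbs ≠ 0 :=
    mul_ne_zero (Finset.prod_ne_zero_iff.mpr fun i _ => have := hfin i; Nat.card_pos.ne')
      (Int.natAbs_ne_zero.mpr (gcd_complementaryProduct_ne_zero hq0))
  have hcard := AddCommGroup.natCard_torsion_quotient
    (amalgamationSubgroup_le_ker_amalgamationDegree i0) (hindex ▸ hindex_ne)
  rw [hindex] at hcard
  refine ⟨(linearIndependent_piMap_amalgamationRelation hq0 i0).of_comp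
    (AddMonoidHom.piMap w).toIntLinearMap, Nat.finite_of_card_ne_zero (hcard ▸ hindex_ne), ?_⟩
  rw [hcard]
  push_cast
  rw [Int.abs_eq_normalize, Finset.normalize_gcd]

/-- Abstract group-theoretic content of Theorem 6.5 of Neumann–Wahl, "The End Curve
Theorem for normal complex surface singularities".  Given abelian groups
`G 0, …, G (k-1)` (`k ≥ 2`) with surjections `w i : G i → ℤ` having finite kernels
of cardinality `r i`, and elements `Q i ∈ G i` of positive weight `q i = w i (Q i)`,
set `Qp i = ∏_{j ≠ i} q j` and `h = gcd (Qp 0, …, Qp (k-1))`.  In `⊕ G i`, the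
elements `A j = ι 0 (Q 0) - ι j (Q j)` (`j ≠ 0`) are a free (ℤ-linearly
independent) basis of the subgroup `K` they generate (so `K` is free abelian of
rank `k - 1`), and the torsion subgroup of `(⊕ G i) / K` is finite of cardinality
`r 0 ⋯ r (k-1) · h`. -/
theorem torsion_of_amalgamated_character_group (k : ℕ) (hk : 2 ≤ k)
    (i0 : Fin k) (hi0 : (i0 : ℕ) = 0)
    (G : Fin k → Type) [∀ i, AddCommGroup (G i)]
    (w : (i : Fin k) → G i →+ ℤ) (hw : ∀ i, Function.Surjective (w i))
    (hfin : ∀ i, Finite ((w i).ker))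
    (r : Fin k → ℕ) (hr : ∀ i, r i = Nat.card ((w i).ker))
    (Q : (i : Fin k) → G i)
    (q : Fin k → ℤ) (hq : ∀ i, q i = w i (Q i)) (hqpos : ∀ i, 0 < q i)
    (Qp : Fin k → ℤ) (hQp : ∀ i, Qp i = ∏ j ∈ Finset.univ.erase i, q j)
    (h : ℤ) (hh : h = Finset.gcd Finset.univ Qp)
    (A : {j : Fin k // j ≠ i0} → ((i : Fin k) → G i))
    (hA : ∀ j, A j = Pi.single i0 (Q i0) - Pi.single j.1 (Q j.1))
    (K : AddSubgroup ((i : Fin k) → G i))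
    (hK : K = AddSubgroup.closure (Set.range A)) :
    LinearIndependent ℤ A ∧
    Finite (AddCommGroup.torsion (((i : Fin k) → G i) ⧸ K)) ∧
    (Nat.card (AddCommGroup.torsion (((i : Fin k) → G i) ⧸ K)) : ℤ) =
      (∏ i, (r i : ℤ)) * h :=
  torsion_of_amalgamated_character_group_general k i0 G w hw hfin r hr Q q hq hqpos Qp hQp h hh A hA
    K hK
end
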